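/- arXiv:2408.04616 — 7 statements merged into one kernel-verified Lean document; each statement's English description precedes it below -/
import Mathlib

section
/- Let λ and μ be even partitions of 2d. If p_λ(x) ≥ p_μ(x) for every positive integer n and every x ∈ ℝ^n, then for every positive integer n the polynomial p_λ − p_μ ∈ ℝ[X_1, …, X_n] is a sum of squares. -/
open scoped BigOperators

/-- The number of parts of a partition. -/
def len {d : ℕ} (lam : Nat.Partition d) : ℕ :=
  Multiset.card lam.parts

/-- Power sum `p_r(x) = Σ_i x_i^r`. -/
def psum {n : ℕ} (r : ℕ) (x : Fin n → ℝ) : ℝ :=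
  ∑ i, x i ^ r

/-- `p_λ(x) = Π_i p_{λ_i}(x)`. -/
def ppart {n d : ℕ} (lam : Nat.Partition d) (x : Fin n → ℝ) : ℝ :=
  (lam.parts.map fun r => psum r x).prod

/-- The power sum polynomial `p_r = X_1^r + ⋯ + X_n^r`. -/
noncomputable def psumPoly (n r : ℕ) : MvPolynomial (Fin n) ℝ :=
  ∑ i : Fin n, MvPolynomial.X i ^ r

/-- The polynomial `p_λ = Π_i p_{λ_i}` in `ℝ[X_1, …, X_n]`. -/
noncomputable def ppoly (n : ℕ) {d : ℕ} (lam : Nat.Partition d) :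
    MvPolynomial (Fin n) ℝ :=
  (lam.parts.map fun r => psumPoly n r).prod

/-- `f` is a sum of squares of polynomials. -/
def IsSOS {n : ℕ} (f : MvPolynomial (Fin n) ℝ) : Prop :=
  ∃ (m : ℕ) (q : Fin m → MvPolynomial (Fin n) ℝ), f = ∑ i, q i ^ 2


namespace NSOS
open List Multiset Finset


lemma take_sum_le_of_sublist : ∀ {l s : List ℕ}, s <+ l → l.Pairwise (· ≤ ·) →
    (l.take s.length).sum ≤ s.sum := by
  intro l s hs
  induction hs with
  | slnil => simp
  | @cons l₁ l₂ a h ih =>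
    intro hsort
    have hlen : l₁.length ≤ l₂.length := h.length_le
    have ih' := ih (List.pairwise_cons.mp hsort).2
    rcases Nat.eq_zero_or_pos l₁.length with h0 | hpos
    · simp [h0]
    · obtain ⟨k, hk⟩ : ∃ k, l₁.length = k + 1 := ⟨l₁.length - 1, by omega⟩
      rw [hk] at ih' ⊢
      rw [List.take_succ_cons, List.sum_cons]
      have hkl : k < l₂.length := by omega
      have htk : l₂.take (k+1) = l₂.take k ++ [l₂[k]] := by
        rw [List.take_succ, List.getElem?_eq_getElem hkl]; rfl
      rw [htk, List.sum_append, List.sum_cons, List.sum_nil] at ih'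
      have ha : a ≤ l₂[k] := (List.pairwise_cons.mp hsort).1 _ (l₂.getElem_mem hkl)
      omega
  | @cons_cons l₁ l₂ a h ih =>
    intro hsort
    simp only [List.length_cons, List.take_succ_cons, List.sum_cons]
    exact Nat.add_le_add_left (ih (List.pairwise_cons.mp hsort).2) a

/-- sum of the `k` smallest elements of a multiset of naturals -/
def smin (k : ℕ) (M : Multiset ℕ) : ℕ := ((M.sort (· ≤ ·)).take k).sum

lemma smin_zero (M : Multiset ℕ) : smin 0 M = 0 := rfl

lemma smin_exists {k : ℕ} {M : Multiset ℕ} (hk : k ≤ Multiset.card M) :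
    ∃ T : Multiset ℕ, T ≤ M ∧ Multiset.card T = k ∧ T.sum = smin k M := by
  refine ⟨((M.sort (· ≤ ·)).take k : List ℕ), ?_, ?_, ?_⟩
  · conv_rhs => rw [← Multiset.sort_eq M (· ≤ ·)]
    exact Multiset.coe_le.mpr (List.take_sublist k _).subperm
  · rw [Multiset.coe_card, List.length_take]
    simpa using hk
  · rw [Multiset.sum_coe]; rfl

lemma smin_le_sum {T M : Multiset ℕ} (hT : T ≤ M) : smin (Multiset.card T) M ≤ T.sum := by
  have h1 : (T.sort (· ≤ ·)) <+~ (M.sort (· ≤ ·)) := by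
    rw [← Multiset.coe_le, Multiset.sort_eq, Multiset.sort_eq]; exact hT
  have h2 : (T.sort (· ≤ ·)) <+ (M.sort (· ≤ ·)) :=
    List.sublist_of_subperm_of_pairwise h1 (Multiset.pairwise_sort _ _) (Multiset.pairwise_sort _ _)
  have h3 := take_sum_le_of_sublist h2 (Multiset.pairwise_sort _ _)
  have hlen : (T.sort (· ≤ ·)).length = Multiset.card T := Multiset.length_sort _
  have hsum : (T.sort (· ≤ ·)).sum = T.sum := by
    conv_rhs => rw [← Multiset.sort_eq T (· ≤ ·)]
    rw [Multiset.sum_coe]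
  rw [hlen, hsum] at h3
  exact h3

lemma smin_card (M : Multiset ℕ) : smin (Multiset.card M) M = M.sum := by
  unfold smin
  rw [List.take_of_length_le (by simp), ← Multiset.sum_coe, Multiset.sort_eq]

lemma smin_le_smin_of_le {k : ℕ} {S M : Multiset ℕ} (h : S ≤ M) (hk : k ≤ Multiset.card S) :
    smin k M ≤ smin k S := by
  obtain ⟨T, hT, hcard, hsum⟩ := smin_exists hk
  calc smin k M = smin (Multiset.card T) M := by rw [hcard]
  _ ≤ T.sum := smin_le_sum (hT.trans h)
  _ = smin k S := hsum

lemma sum_le_card_mul {T : Multiset ℕ} {c : ℕ} (h : ∀ y ∈ T, y ≤ c) :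
    T.sum ≤ Multiset.card T * c := by
  induction T using Multiset.induction with
  | empty => simp
  | cons a s ih =>
    simp only [Multiset.sum_cons, Multiset.card_cons]
    have := h a (Multiset.mem_cons_self a s)
    have := ih (fun y hy => h y (Multiset.mem_cons_of_mem hy))
    nlinarith
lemma card_mul_le_sum {T : Multiset ℕ} {c : ℕ} (h : ∀ y ∈ T, c ≤ y) :
    Multiset.card T * c ≤ T.sum := by
  induction T using Multiset.induction with
  | empty => simp
  | cons a s ih =>
    simp only [Multiset.sum_cons, Multiset.card_cons]
    have := h a (Multiset.mem_cons_self a s)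
    have := ih (fun y hy => h y (Multiset.mem_cons_of_mem hy))
    nlinarith



/-- max decomposition -/
lemma exists_max_cons {M : Multiset ℕ} (hM : M ≠ 0) :
    ∃ a S, M = a ::ₘ S ∧ ∀ y ∈ S, y ≤ a := by
  induction M using Multiset.induction with
  | empty => exact absurd rfl hM
  | cons a s ih =>
    rcases eq_or_ne s 0 with rfl | hs
    · exact ⟨a, 0, rfl, by simp⟩
    · obtain ⟨b, S', hb, hmax⟩ := ih hs
      rcases le_total a b with hab | hba
      · refine ⟨b, a ::ₘ S', by rw [hb, Multiset.cons_swap], ?_⟩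
        intro y hy
        rcases Multiset.mem_cons.mp hy with rfl | hy'
        · exact hab
        · exact hmax y hy'
      · refine ⟨a, s, rfl, ?_⟩
        intro y hy
        rw [hb] at hy
        rcases Multiset.mem_cons.mp hy with rfl | hy'
        · exact hba
        · exact (hmax y hy').trans hba

/-- split of a submultiset of a sum -/
lemma split_le_add {T F G : Multiset ℕ} (h : T ≤ F + G) :
    ∃ T₁ T₂, T₁ ≤ F ∧ T₂ ≤ G ∧ T = T₁ + T₂ := by
  refine ⟨T ∩ F, T - F, Multiset.inter_le_right .., ?_, ?_⟩
  · rw [Multiset.le_iff_count]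
    intro a
    have := Multiset.le_iff_count.mp h a
    rw [Multiset.count_sub]
    rw [Multiset.count_add] at this
    omega
  · ext a
    have := Multiset.le_iff_count.mp h a
    rw [Multiset.count_add, Multiset.count_inter, Multiset.count_sub]
    rw [Multiset.count_add] at this
    have hmin : Multiset.count a T ⊓ Multiset.count a F
        = min (Multiset.count a T) (Multiset.count a F) := rfl
    rw [hmin]
    omega

lemma cons_le_of_mem_sub {u : ℕ} {T S : Multiset ℕ} (hT : T ≤ S) (hu : u ∈ S - T) :
    u ::ₘ T ≤ S := by
  rw [Multiset.le_iff_count]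
  intro a
  have h1 := Multiset.le_iff_count.mp hT a
  have h3 := Multiset.count_pos.mpr hu
  rw [Multiset.count_sub] at h3
  by_cases hau : a = u
  · subst hau
    rw [Multiset.count_cons_self]
    omega
  · rw [Multiset.count_cons_of_ne hau]
    omega

/-- dropping a maximal element doesn't change the sum of the k smallest, k ≤ card S -/
lemma smin_cons_big {k g : ℕ} {S : Multiset ℕ} (hg : ∀ y ∈ S, y ≤ g)
    (hk : k ≤ Multiset.card S) : smin k (g ::ₘ S) = smin k S := by
  apply _root_.le_antisymm
  · exact smin_le_smin_of_le (Multiset.le_cons_self S g) hk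
  · -- any minimizer of g ::ₘ S can be converted
    obtain ⟨T, hT, hcard, hsum⟩ := smin_exists (k := k) (M := g ::ₘ S)
      (by rw [Multiset.card_cons]; omega)
    rw [← hsum]
    by_cases hgT : g ∈ T
    · -- replace g by an element of S - T.erase g
      set T₀ := T.erase g with hT₀
      have hT₀S : T₀ ≤ S := by
        have := Multiset.erase_le_erase g hT
        rwa [Multiset.erase_cons_head] at this
      have hcard₀ : Multiset.card T₀ = k - 1 := by
        rw [hT₀, Multiset.card_erase_of_mem hgT, hcard]; rfl
      have hk1 : 1 ≤ k := by
        rw [← hcard]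
        exact Multiset.card_pos.mpr (fun h0 => by simp [h0] at hgT)
      have hne : S - T₀ ≠ 0 := by
        intro h0
        have hcs := Multiset.card_sub hT₀S
        rw [h0, Multiset.card_zero] at hcs
        omega
      obtain ⟨u, hu⟩ := Multiset.exists_mem_of_ne_zero hne
      have huS : u ∈ S := Multiset.mem_of_le (Multiset.sub_le_self S T₀) hu
      have hle : u ::ₘ T₀ ≤ S := cons_le_of_mem_sub hT₀S hu
      have hc : Multiset.card (u ::ₘ T₀) = k := by
        rw [Multiset.card_cons, hcard₀]; omega
      calc smin k S = smin (Multiset.card (u ::ₘ T₀)) S := by rw [hc]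
      _ ≤ (u ::ₘ T₀).sum := smin_le_sum hle
      _ = u + T₀.sum := Multiset.sum_cons ..
      _ ≤ g + T₀.sum := by have := hg u huS; omega
      _ = T.sum := by rw [← Multiset.sum_cons, Multiset.cons_erase hgT]
    · have hTS : T ≤ S := by
        rw [Multiset.le_iff_count]
        intro a
        have hc := Multiset.le_iff_count.mp hT a
        by_cases hag : a = g
        · subst hag
          have h0 : Multiset.count a T = 0 := Multiset.count_eq_zero.mpr hgT
          omega
        · rw [Multiset.count_cons_of_ne hag] at hc
          exact hc
      calc smin k S = smin (Multiset.card T) S := by rw [hcard]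
      _ ≤ T.sum := smin_le_sum hTS

/-- interface lemma: if every element of F is ≤ every element of G then
the k smallest of F+G are inside F -/
lemma smin_interface {k : ℕ} {F G : Multiset ℕ}
    (hFG : ∀ f ∈ F, ∀ g ∈ G, f ≤ g) (hk : k ≤ Multiset.card F) :
    smin k (F + G) = smin k F := by
  apply _root_.le_antisymm
  · exact smin_le_smin_of_le (Multiset.le_add_right F G) hk
  · rcases eq_or_ne F 0 with rfl | hF0
    · have hk0 : k = 0 := by simpa using hk
      subst hk0
      simp [smin_zero]
    · obtain ⟨m₀, S₀, hS₀, hmax₀⟩ := exists_max_cons hF0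
      have hm₀F : m₀ ∈ F := by rw [hS₀]; exact Multiset.mem_cons_self ..
      have hm₀max : ∀ y ∈ F, y ≤ m₀ := by
        intro y hy
        rw [hS₀] at hy
        rcases Multiset.mem_cons.mp hy with rfl | hys
        · exact le_refl _
        · exact hmax₀ y hys
      obtain ⟨T, hT, hcard, hsum⟩ := smin_exists (k := k) (M := F + G)
        (by rw [Multiset.card_add]; omega)
      rw [← hsum]
      obtain ⟨T₁, T₂, hT₁, hT₂, hTsplit⟩ := split_le_add hT
      -- extend T₁ by card T₂ elements of F - T₁
      have hcards : Multiset.card T₁ + Multiset.card T₂ = k := by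
        rw [← Multiset.card_add, ← hTsplit, hcard]
      have hcard₁ : Multiset.card (F - T₁) = Multiset.card F - Multiset.card T₁ :=
        Multiset.card_sub hT₁
      obtain ⟨U, hU, hUcard, hUsum⟩ := smin_exists (M := F - T₁) (k := Multiset.card T₂) (by omega)
      have hT₁U : T₁ + U ≤ F := by
        rw [Multiset.le_iff_count]
        intro a
        have h1 := Multiset.le_iff_count.mp hU a
        have h2 := Multiset.le_iff_count.mp hT₁ a
        rw [Multiset.count_sub] at h1
        rw [Multiset.count_add]
        omega
      have hcardTU : Multiset.card (T₁ + U) = k := by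
        rw [Multiset.card_add, hUcard]; omega
      have hUle : U.sum ≤ T₂.sum := by
        have h1 : U.sum ≤ Multiset.card U * m₀ := sum_le_card_mul (fun y hy =>
          hm₀max y (Multiset.mem_of_le (hU.trans (Multiset.sub_le_self ..)) hy))
        have h2 : Multiset.card T₂ * m₀ ≤ T₂.sum := card_mul_le_sum (fun y hy =>
          hFG m₀ hm₀F y (Multiset.mem_of_le hT₂ hy))
        rw [hUcard] at h1
        omega
      calc smin k F = smin (Multiset.card (T₁ + U)) F := by rw [hcardTU]
      _ ≤ (T₁ + U).sum := smin_le_sum hT₁U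
      _ = T₁.sum + U.sum := by rw [Multiset.sum_add]
      _ ≤ T₁.sum + T₂.sum := by omega
      _ = T.sum := by rw [hTsplit, Multiset.sum_add]



inductive Step : Multiset ℕ → Multiset ℕ → Prop
  | merge (a b : ℕ) (S : Multiset ℕ) : Step (a ::ₘ b ::ₘ S) ((a + b) ::ₘ S)
  | transfer (a b : ℕ) (S : Multiset ℕ) (h : b + 4 ≤ a) :
      Step (a ::ₘ b ::ₘ S) ((a - 2) ::ₘ (b + 2) ::ₘ S)

def Reach : Multiset ℕ → Multiset ℕ → Prop := Relation.ReflTransGen Step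

lemma add_cons (s t : Multiset ℕ) (a : ℕ) : s + (a ::ₘ t) = a ::ₘ (s + t) := by
  rw [add_comm, Multiset.cons_add, add_comm]

lemma Step.cons_left {A : ℕ} {M N : Multiset ℕ} (h : Step M N) :
    Step (A ::ₘ M) (A ::ₘ N) := by
  cases h with
  | merge a b S =>
    have e1 : A ::ₘ a ::ₘ b ::ₘ S = a ::ₘ b ::ₘ A ::ₘ S := by
      rw [Multiset.cons_swap A a, Multiset.cons_swap A b]
    have e2 : A ::ₘ (a + b) ::ₘ S = (a + b) ::ₘ A ::ₘ S := Multiset.cons_swap ..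
    rw [e1, e2]
    exact Step.merge a b (A ::ₘ S)
  | transfer a b S hab =>
    have e1 : A ::ₘ a ::ₘ b ::ₘ S = a ::ₘ b ::ₘ A ::ₘ S := by
      rw [Multiset.cons_swap A a, Multiset.cons_swap A b]
    have e2 : A ::ₘ (a - 2) ::ₘ (b + 2) ::ₘ S = (a - 2) ::ₘ (b + 2) ::ₘ A ::ₘ S := by
      rw [Multiset.cons_swap A (a - 2), Multiset.cons_swap A (b + 2)]
    rw [e1, e2]
    exact Step.transfer a b (A ::ₘ S) hab

lemma Reach.cons_left {A : ℕ} {M N : Multiset ℕ} (h : Reach M N) :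
    Reach (A ::ₘ M) (A ::ₘ N) :=
  Relation.ReflTransGen.lift (A ::ₘ ·) (fun _ _ (hs : Step _ _) => hs.cons_left) _ _ h

lemma sq_decrease (A x s : ℕ) (h : x + 4 ≤ A) :
    (A - 2) * (A - 2) + ((x + 2) * (x + 2) + s) < A * A + (x * x + s) := by
  obtain ⟨e, he⟩ : ∃ e, A = x + 4 + e := ⟨A - (x + 4), by omega⟩
  subst he
  have h2 : x + 4 + e - 2 = x + 2 + e := by omega
  rw [h2]
  nlinarith

/-- The main combinatorial theorem: domination implies reachability. -/
theorem reach_of_dominates : ∀ (M N : Multiset ℕ),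
    (∀ x ∈ M, Even x) → (∀ x ∈ N, Even x) →
    (∀ x ∈ M, 0 < x) → (∀ x ∈ N, 0 < x) →
    M.sum = N.sum → Multiset.card N ≤ Multiset.card M →
    (∀ k, k < Multiset.card N → smin k M ≤ smin k N) → Reach M N := by
  intro M N hME hNE hMP hNP hsum hcard hdom
  by_cases hcards : Multiset.card N = Multiset.card M
  · -- equal cardinality phase
    rcases eq_or_ne M 0 with rfl | hM0
    · have hN0 : N = 0 := by
        rw [← Multiset.card_eq_zero]
        simpa using hcards
      subst hN0
      exact Relation.ReflTransGen.refl
    · obtain ⟨A, S, hAS, hAmax⟩ := exists_max_cons hM0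
      have hN0 : N ≠ 0 := by
        intro h0
        apply hM0
        rw [← Multiset.card_eq_zero]
        rw [h0] at hcards
        simpa using hcards.symm
      obtain ⟨B, T, hBT, hBmax⟩ := exists_max_cons hN0
      have hcS : Multiset.card M = Multiset.card S + 1 := by rw [hAS]; simp
      have hcT : Multiset.card N = Multiset.card T + 1 := by rw [hBT]; simp
      have hAM : A ∈ M := by rw [hAS]; exact Multiset.mem_cons_self ..
      have hBN : B ∈ N := by rw [hBT]; exact Multiset.mem_cons_self ..
      have hNmax : ∀ y ∈ N, y ≤ B := by
        intro y hy
        rw [hBT] at hy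
        rcases Multiset.mem_cons.mp hy with rfl | hy'
        · exact le_refl _
        · exact hBmax y hy'
      have hMmax : ∀ y ∈ M, y ≤ A := by
        intro y hy
        rw [hAS] at hy
        rcases Multiset.mem_cons.mp hy with rfl | hy'
        · exact le_refl _
        · exact hAmax y hy'
      have hsumM : M.sum = A + S.sum := by rw [hAS, Multiset.sum_cons]
      have hsumN : N.sum = B + T.sum := by rw [hBT, Multiset.sum_cons]
      have hBA : B ≤ A := by
        have h1 : smin (Multiset.card S) M ≤ smin (Multiset.card S) N :=
          hdom _ (by omega)
        have h2 : smin (Multiset.card S) M = S.sum := by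
          rw [hAS, smin_cons_big hAmax (le_refl _), smin_card]
        have h3 : smin (Multiset.card S) N = T.sum := by
          have hST : Multiset.card S = Multiset.card T := by omega
          rw [hBT, hST, smin_cons_big hBmax (le_refl _), smin_card]
        omega
      rcases eq_or_ne A B with hAB | hABne
      · -- peel off the common maximum
        have hReach : Reach S T := by
          apply reach_of_dominates S T
          · exact fun x hx => hME x (by rw [hAS]; exact Multiset.mem_cons_of_mem hx)
          · exact fun x hx => hNE x (by rw [hBT]; exact Multiset.mem_cons_of_mem hx)
          · exact fun x hx => hMP x (by rw [hAS]; exact Multiset.mem_cons_of_mem hx)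
          · exact fun x hx => hNP x (by rw [hBT]; exact Multiset.mem_cons_of_mem hx)
          · omega
          · omega
          · intro k hk
            have h1 : smin k S = smin k M := by
              rw [hAS, smin_cons_big hAmax (by omega)]
            have h2 : smin k T = smin k N := by
              rw [hBT, smin_cons_big hBmax (by omega)]
            rw [h1, h2]
            exact hdom k (by omega)
        rw [hAS, hBT, hAB]
        exact hReach.cons_left
      · -- A > B : transfer
        obtain ⟨α, hα⟩ := hME A hAM
        obtain ⟨β, hβ⟩ := hNE B hBN
        have hBA2 : B + 2 ≤ A := by omega
        set F := S.filter (fun y => y + 4 ≤ A) with hFdef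
        set G₁ := S.filter (fun y => ¬ (y + 4 ≤ A)) with hG₁def
        have hSsplit : F + G₁ = S := Multiset.filter_add_not _ S
        have hG₁big : ∀ y ∈ G₁, A ≤ y + 2 := by
          intro y hy
          have hyS : y ∈ S := Multiset.mem_of_le (Multiset.filter_le _ _) hy
          have hny : ¬ (y + 4 ≤ A) := (Multiset.mem_filter.mp hy).2
          obtain ⟨γ, hγ⟩ := hME y (by rw [hAS]; exact Multiset.mem_cons_of_mem hyS)
          omega
        have hFsmall : ∀ y ∈ F, y + 4 ≤ A := fun y hy => (Multiset.mem_filter.mp hy).2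
        rcases eq_or_ne F 0 with hF0 | hFne
        · -- impossible: all of S is ≥ A - 2
          exfalso
          have hSbig : ∀ y ∈ S, A ≤ y + 2 := by
            intro y hy
            apply hG₁big
            have : y ∈ F + G₁ := by rw [hSsplit]; exact hy
            rw [hF0, zero_add] at this
            exact this
          have h1 : Multiset.card S * (A - 2) ≤ S.sum :=
            card_mul_le_sum (fun y hy => by have := hSbig y hy; omega)
          have h2 : N.sum ≤ Multiset.card N * B := sum_le_card_mul hNmax
          have h3 : Multiset.card N * B ≤ Multiset.card N * (A - 2) :=
            Nat.mul_le_mul_left _ (by omega)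
          have h4 : Multiset.card N * (A - 2) = Multiset.card S * (A - 2) + (A - 2) := by
            rw [hcards, hcS, Nat.succ_mul]
          omega
        · obtain ⟨x, F₀, hxF, hxmax⟩ := exists_max_cons hFne
          have hxFmem : x ∈ F := by rw [hxF]; exact Multiset.mem_cons_self ..
          have hxS : x ∈ S := Multiset.mem_of_le (Multiset.filter_le _ _) hxFmem
          have hx4 : x + 4 ≤ A := hFsmall x hxFmem
          have hxM : x ∈ M := by rw [hAS]; exact Multiset.mem_cons_of_mem hxS
          have hxpos : 0 < x := hMP x hxM
          set S₀ := F₀ + G₁ with hS₀def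
          have hS₀ : S = x ::ₘ S₀ := by
            rw [hS₀def, ← hSsplit, hxF, Multiset.cons_add]
          set M' := (A - 2) ::ₘ (x + 2) ::ₘ S₀ with hM'def
          have hstep : Step M M' := by
            rw [hAS, hS₀]
            exact Step.transfer A x S₀ hx4
          -- cardinalities
          have hcF : Multiset.card F = Multiset.card F₀ + 1 := by rw [hxF]; simp
          have hcS' : Multiset.card S = Multiset.card F + Multiset.card G₁ := by
            rw [← hSsplit]; simp
          set q := Multiset.card F with hqdef
          -- M as interface sum
          have hMsplit : M = F + (A ::ₘ G₁) := by
            rw [hAS, ← hSsplit, add_cons]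
          have hinterM : ∀ f ∈ F, ∀ g ∈ A ::ₘ G₁, f ≤ g := by
            intro f hf g hg
            have hf4 := hFsmall f hf
            rcases Multiset.mem_cons.mp hg with rfl | hg'
            · omega
            · have := hG₁big g hg'
              omega
          -- M' as interface sum
          have hM'split : M' = ((x + 2) ::ₘ F₀) + ((A - 2) ::ₘ G₁) := by
            rw [Multiset.cons_add, add_cons, Multiset.cons_swap]
          have hS₀mem : ∀ y ∈ S₀, y ∈ M := by
            intro y hy
            rw [hAS, hS₀]
            exact Multiset.mem_cons_of_mem (Multiset.mem_cons_of_mem hy)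
          -- evens and pos for M'
          have hM'E : ∀ y ∈ M', Even y := by
            intro y hy
            rw [hM'def] at hy
            rcases Multiset.mem_cons.mp hy with rfl | hy' 
            · obtain ⟨e, he⟩ : ∃ e, A = 2 * e := ⟨α, by omega⟩
              exact ⟨e - 1, by omega⟩
            rcases Multiset.mem_cons.mp hy' with rfl | hy''
            · obtain ⟨γ, hγ⟩ := hME x hxM
              exact ⟨γ + 1, by omega⟩
            · exact hME y (hS₀mem y hy'')
          have hM'P : ∀ y ∈ M', 0 < y := by
            intro y hy
            rw [hM'def] at hy
            rcases Multiset.mem_cons.mp hy with rfl | hy'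
            · omega
            rcases Multiset.mem_cons.mp hy' with rfl | hy''
            · omega
            · exact hMP y (hS₀mem y hy'')
          have hsum' : M'.sum = N.sum := by
            have h1 : M.sum = A + (x + S₀.sum) := by rw [hsumM, hS₀, Multiset.sum_cons]
            have h2 : M'.sum = (A - 2) + ((x + 2) + S₀.sum) := by
              rw [hM'def, Multiset.sum_cons, Multiset.sum_cons]
            omega
          have hcard' : Multiset.card N ≤ Multiset.card M' := by
            have : Multiset.card M' = Multiset.card S₀ + 2 := by rw [hM'def]; simp
            have : Multiset.card M = Multiset.card S₀ + 2 := by rw [hAS, hS₀]; simp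
            omega
          have hcM' : Multiset.card M' = Multiset.card M := by
            have h1 : Multiset.card M' = Multiset.card S₀ + 2 := by rw [hM'def]; simp
            have h2 : Multiset.card M = Multiset.card S₀ + 2 := by rw [hAS, hS₀]; simp
            omega
          have hdom' : ∀ k, k < Multiset.card N → smin k M' ≤ smin k N := by
            intro k hk
            by_cases hkq : k < q
            · -- the k smallest of M' are in F₀
              have hkF₀ : k ≤ Multiset.card F₀ := by omega
              have hF₀M' : F₀ ≤ M' := by
                rw [hM'split]
                calc F₀ ≤ (x + 2) ::ₘ F₀ := Multiset.le_cons_self ..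
                _ ≤ _ := Multiset.le_add_right ..
              have h1 : smin k M' ≤ smin k F₀ := smin_le_smin_of_le hF₀M' hkF₀
              have h2 : smin k F₀ = smin k F := by
                rw [hxF, smin_cons_big hxmax hkF₀]
              have h3 : smin k F = smin k M := by
                rw [hMsplit, smin_interface hinterM (by omega)]
              have h4 := hdom k hk
              omega
            · -- q ≤ k
              push_neg at hkq
              set j := Multiset.card N - k with hjdef
              have hj1 : 1 ≤ j := by omega
              have hkG : k - q ≤ Multiset.card G₁ := by omega
              obtain ⟨T₂, hT₂le, hT₂card, hT₂sum⟩ := smin_exists (k := k - q) (M := G₁) hkG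
              -- upper bound for smin k M'
              have hTup : ((x + 2) ::ₘ F₀) + T₂ ≤ M' := by
                rw [hM'split]
                exact add_le_add (le_refl _) (hT₂le.trans (Multiset.le_cons_self ..))
              have hTupcard : Multiset.card (((x + 2) ::ₘ F₀) + T₂) = k := by
                simp only [Multiset.card_add, Multiset.card_cons]
                omega
              have hub : smin k M' ≤ (x + 2) + F₀.sum + T₂.sum := by
                have := smin_le_sum hTup
                rw [hTupcard] at this
                rw [Multiset.sum_add, Multiset.sum_cons] at this
                omega
              have hFsum : F.sum = x + F₀.sum := by rw [hxF, Multiset.sum_cons]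
              -- lower bound for smin k N
              obtain ⟨TN, hTNle, hTNcard, hTNsum⟩ := smin_exists (k := k) (M := N) (by omega)
              have hCsum : N.sum = TN.sum + (N - TN).sum := by
                have : N - TN + TN = N := tsub_add_cancel_of_le hTNle
                conv_lhs => rw [← this]
                rw [Multiset.sum_add]
                omega
              have hCcard : Multiset.card (N - TN) = j := by
                rw [Multiset.card_sub hTNle]; omega
              have hCle : (N - TN).sum ≤ j * B := by
                have := sum_le_card_mul (T := N - TN) (c := B)
                  (fun y hy => hNmax y (Multiset.mem_of_le (Multiset.sub_le_self ..) hy))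
                rw [hCcard] at this
                omega
              -- the key inequality
              have hrest : G₁ = T₂ + (G₁ - T₂) := by
                rw [add_comm]
                exact (tsub_add_cancel_of_le hT₂le).symm
              have hrestcard : Multiset.card (G₁ - T₂) = j - 1 := by
                rw [Multiset.card_sub hT₂le]
                omega
              have hrestsum : (j - 1) * (A - 2) ≤ (G₁ - T₂).sum := by
                have := card_mul_le_sum (T := G₁ - T₂) (c := A - 2)
                  (fun y hy => by
                    have := hG₁big y (Multiset.mem_of_le (Multiset.sub_le_self ..) hy)
                    omega)
                rw [hrestcard] at this
                exact this
              have hG₁sum : G₁.sum = T₂.sum + (G₁ - T₂).sum := by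
                conv_lhs => rw [hrest]
                rw [Multiset.sum_add]
              have hNsum2 : N.sum = A + F.sum + G₁.sum := by
                rw [← hsum, hMsplit, Multiset.sum_add, Multiset.sum_cons]
                omega
              have hjB : j * B ≤ (j - 1) * (A - 2) + (A - 2) := by
                have h5 : j * B ≤ j * (A - 2) := Nat.mul_le_mul_left _ (by omega)
                have h6 : j = (j - 1) + 1 := by omega
                have h7 : j * (A - 2) = (j - 1) * (A - 2) + (A - 2) := by
                  conv_lhs => rw [h6]
                  rw [Nat.succ_mul]
                omega
              -- combine everything
              have hfinal : (x + 2) + F₀.sum + T₂.sum + j * B ≤ N.sum := by omega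
              have : smin k N = TN.sum := hTNsum.symm
              omega
          have hReach' : Reach M' N := by
            apply reach_of_dominates M' N hM'E hNE hM'P hNP hsum' hcard' hdom'
          exact Relation.ReflTransGen.head hstep hReach'
  · -- merge phase
    have hlt : Multiset.card N < Multiset.card M := lt_of_le_of_ne hcard hcards
    have hM0 : M ≠ 0 := by
      intro h0
      rw [h0] at hlt
      simp at hlt
    obtain ⟨a, S, haS, hamax⟩ := exists_max_cons hM0
    rcases eq_or_ne S 0 with rfl | hS0
    · exfalso
      have h1 : Multiset.card M = 1 := by rw [haS]; simp
      have h2 : N = 0 := by rw [← Multiset.card_eq_zero]; omega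
      have h3 : M.sum = a := by rw [haS]; simp
      have h4 : 0 < a := hMP a (by rw [haS]; exact Multiset.mem_cons_self ..)
      rw [h2] at hsum
      simp at hsum
      omega
    · obtain ⟨b, S₀, hbS, hbmax⟩ := exists_max_cons hS0
      set M' := (a + b) ::ₘ S₀ with hM'def
      have hstep : Step M M' := by
        rw [haS, hbS]
        exact Step.merge a b S₀
      have haM : a ∈ M := by rw [haS]; exact Multiset.mem_cons_self ..
      have hbM : b ∈ M := by
        rw [haS, hbS]
        exact Multiset.mem_cons_of_mem (Multiset.mem_cons_self ..)
      have hS₀mem : ∀ y ∈ S₀, y ∈ M := by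
        intro y hy
        rw [haS, hbS]
        exact Multiset.mem_cons_of_mem (Multiset.mem_cons_of_mem hy)
      have hcM : Multiset.card M = Multiset.card S₀ + 2 := by rw [haS, hbS]; simp
      have hcM' : Multiset.card M' = Multiset.card S₀ + 1 := by rw [hM'def]; simp
      have hM'E : ∀ y ∈ M', Even y := by
        intro y hy
        rw [hM'def] at hy
        rcases Multiset.mem_cons.mp hy with rfl | hy'
        · exact (hME a haM).add (hME b hbM)
        · exact hME y (hS₀mem y hy')
      have hM'P : ∀ y ∈ M', 0 < y := by
        intro y hy
        rw [hM'def] at hy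
        rcases Multiset.mem_cons.mp hy with rfl | hy'
        · have := hMP a haM
          omega
        · exact hMP y (hS₀mem y hy')
      have hsum' : M'.sum = N.sum := by
        have h1 : M.sum = a + (b + S₀.sum) := by rw [haS, hbS, Multiset.sum_cons, Multiset.sum_cons]
        have h2 : M'.sum = (a + b) + S₀.sum := by rw [hM'def, Multiset.sum_cons]
        omega
      have hba : b ≤ a := hamax b (by rw [hbS]; exact Multiset.mem_cons_self ..)
      have hdom' : ∀ k, k < Multiset.card N → smin k M' ≤ smin k N := by
        intro k hk
        have hkS₀ : k ≤ Multiset.card S₀ := by omega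
        have h1 : smin k M' = smin k S₀ := by
          rw [hM'def]
          apply smin_cons_big _ hkS₀
          intro y hy
          have : y ≤ b := hbmax y hy
          omega
        have h2 : smin k M = smin k S₀ := by
          rw [haS, hbS]
          rw [smin_cons_big _ (by simp; omega), smin_cons_big hbmax hkS₀]
          intro y hy
          rcases Multiset.mem_cons.mp hy with rfl | hy'
          · exact hba
          · exact (hbmax y hy').trans hba
        have h3 := hdom k hk
        omega
      have hReach' : Reach M' N := by
        apply reach_of_dominates M' N hM'E hNE hM'P hNP hsum' (by omega) hdom'
      exact Relation.ReflTransGen.head hstep hReach'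
termination_by M N => (Multiset.card M, (M.map (fun y => y * y)).sum)
decreasing_by
  · simp_wf
    rw [Prod.lex_iff]
    left
    dsimp only
    omega
  · simp_wf
    have hGfilt : Multiset.filter (fun x => A < x + 4) S = G₁ := by
      rw [hG₁def]
      apply Multiset.filter_congr
      intro y hy
      constructor
      · intro hlt
        omega
      · intro hle
        omega
    rw [Prod.lex_iff]
    right
    refine ⟨?_, ?_⟩ <;> dsimp only <;> rw [hGfilt]
    · omega
    · have eM : (Multiset.map (fun x => x * x) M).sum
          = A * A + (x * x + ((Multiset.map (fun x => x * x) F₀).sum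
            + (Multiset.map (fun x => x * x) G₁).sum)) := by
        rw [hAS, hS₀, hS₀def, Multiset.map_cons, Multiset.sum_cons, Multiset.map_cons,
          Multiset.sum_cons, Multiset.map_add, Multiset.sum_add]
      rw [eM]
      exact sq_decrease A x _ hx4
  · simp_wf
    rw [Prod.lex_iff]
    left
    dsimp only
    omega


open Finset

lemma isSumSq_of_eq_sq {R : Type*} [Mul R] [AddMonoid R] {a b : R} (h : a = b * b) :
    IsSumSq a := by
  have := IsSumSq.sq_add b IsSumSq.zero
  rwa [add_zero, ← h] at this

lemma isSumSq_sum {R : Type*} [Mul R] [AddCommMonoid R] {ι : Type*} (s : Finset ι)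
    (f : ι → R) (h : ∀ i ∈ s, IsSumSq (f i)) : IsSumSq (∑ i ∈ s, f i) :=
  Finset.sum_induction f IsSumSq (fun _ _ ha hb => ha.add hb) IsSumSq.zero h

lemma isSumSq_mul_sq {R : Type*} [CommRing R] {t : R} (x : R) (ht : IsSumSq t) :
    IsSumSq (x * x * t) := by
  induction ht with
  | zero => simpa using IsSumSq.zero
  | @sq_add y s hs ih =>
    have h1 : x * x * (y * y + s) = (x * y) * (x * y) + x * x * s := by ring
    rw [h1]
    exact IsSumSq.sq_add _ ih

lemma isSumSq_mul {R : Type*} [CommRing R] {a b : R} (ha : IsSumSq a) (hb : IsSumSq b) :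
    IsSumSq (a * b) := by
  induction ha with
  | zero => simpa using IsSumSq.zero
  | @sq_add x s hs ih =>
    have h1 : (x * x + s) * b = x * x * b + s * b := by ring
    rw [h1]
    exact (isSumSq_mul_sq x hb).add ih

lemma isSumSq_isSOS {n : ℕ} {f : MvPolynomial (Fin n) ℝ} (h : IsSumSq f) : IsSOS f := by
  induction h with
  | zero => exact ⟨0, ![], by simp⟩
  | @sq_add a s hs ih =>
    obtain ⟨m, q, hq⟩ := ih
    refine ⟨m + 1, Fin.cons a q, ?_⟩
    rw [Fin.sum_univ_succ]
    simp only [Fin.cons_zero, Fin.cons_succ]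
    rw [← hq, sq]

variable {n : ℕ}

lemma isSumSq_psumPoly {r : ℕ} (hr : Even r) : IsSumSq (psumPoly n r) := by
  obtain ⟨w, hw⟩ := hr
  apply isSumSq_sum
  intro i _
  exact isSumSq_of_eq_sq (b := MvPolynomial.X i ^ w) (by rw [hw, pow_add])

/-- the product of power sums over a multiset -/
noncomputable def pp (n : ℕ) (M : Multiset ℕ) : MvPolynomial (Fin n) ℝ :=
  (M.map fun r => psumPoly n r).prod

lemma isSumSq_pp {M : Multiset ℕ} (h : ∀ r ∈ M, Even r) : IsSumSq (pp n M) := by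
  induction M using Multiset.induction with
  | empty => exact isSumSq_of_eq_sq (b := 1) (by simp [pp])
  | cons a S ih =>
    have h1 : pp n (a ::ₘ S) = psumPoly n a * pp n S := by
      rw [pp, Multiset.map_cons, Multiset.prod_cons]; rfl
    rw [h1]
    exact isSumSq_mul (isSumSq_psumPoly (h a (Multiset.mem_cons_self ..)))
      (ih fun r hr => h r (Multiset.mem_cons_of_mem hr))

lemma psum_mul (a b : ℕ) : psumPoly n a * psumPoly n b
    = psumPoly n (a + b)
      + ∑ i : Fin n, ∑ j ∈ Finset.univ.erase i, MvPolynomial.X i ^ a * MvPolynomial.X j ^ b := by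
  calc psumPoly n a * psumPoly n b
      = ∑ i : Fin n, ∑ j : Fin n, MvPolynomial.X i ^ a * MvPolynomial.X j ^ b :=
        Finset.sum_mul_sum _ _ _ _
  _ = ∑ i : Fin n, (MvPolynomial.X i ^ (a + b)
        + ∑ j ∈ Finset.univ.erase i, MvPolynomial.X i ^ a * MvPolynomial.X j ^ b) := by
      apply Finset.sum_congr rfl
      intro i _
      rw [← Finset.add_sum_erase _ _ (Finset.mem_univ i), ← pow_add]
  _ = _ := by
      rw [Finset.sum_add_distrib]; rfl

lemma key_merge {a b : ℕ} (ha : Even a) (hb : Even b) :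
    IsSumSq (psumPoly n a * psumPoly n b - psumPoly n (a + b)) := by
  obtain ⟨α, hα⟩ := ha
  obtain ⟨β, hβ⟩ := hb
  rw [psum_mul, add_sub_cancel_left]
  apply isSumSq_sum
  intro i _
  apply isSumSq_sum
  intro j _
  exact isSumSq_of_eq_sq (b := MvPolynomial.X i ^ α * MvPolynomial.X j ^ β)
    (by rw [hα, hβ, pow_add, pow_add]; ring)

lemma pair_identity (u v : MvPolynomial (Fin n) ℝ) (β s : ℕ) :
    u ^ (2*β + 2*s + 4) * v ^ (2*β) + v ^ (2*β + 2*s + 4) * u ^ (2*β)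
      - u ^ (2*β + 2*s + 2) * v ^ (2*β + 2) - v ^ (2*β + 2*s + 2) * u ^ (2*β + 2)
    = ∑ w ∈ Finset.range (s+1),
        ((u^2 - v^2) * u ^ (β + w) * v ^ (β + (s - w)))
          * ((u^2 - v^2) * u ^ (β + w) * v ^ (β + (s - w))) := by
  have hg : (∑ w ∈ Finset.range (s+1), (u^2) ^ w * (v^2) ^ (s - w)) * (u^2 - v^2)
      = (u^2) ^ (s+1) - (v^2) ^ (s+1) := by
    have := geom_sum₂_mul (u^2) (v^2) (s+1)
    simpa using this
  have hR : (∑ w ∈ Finset.range (s+1),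
        ((u^2 - v^2) * u ^ (β + w) * v ^ (β + (s - w)))
          * ((u^2 - v^2) * u ^ (β + w) * v ^ (β + (s - w))))
      = ((u^2 - v^2) * ((u^2)^β * (v^2)^β))
        * ((∑ w ∈ Finset.range (s+1), (u^2) ^ w * (v^2) ^ (s - w)) * (u^2 - v^2)) := by
    rw [Finset.sum_mul, Finset.mul_sum]
    apply Finset.sum_congr rfl
    intro w hw
    ring
  rw [hR, hg]
  ring

noncomputable def rhalf : ℝ := (Real.sqrt 2)⁻¹

lemma rhalf_mul_self : rhalf * rhalf = (2⁻¹ : ℝ) := by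
  rw [rhalf, ← mul_inv]
  rw [Real.mul_self_sqrt (by norm_num)]

lemma key_transfer_core (β s : ℕ) :
    IsSumSq (psumPoly n (2*β + 2*s + 4) * psumPoly n (2*β)
      - psumPoly n (2*β + 2*s + 2) * psumPoly n (2*β + 2)) := by
  classical
  set X : Fin n → MvPolynomial (Fin n) ℝ := fun i => MvPolynomial.X i with hX
  set g : Fin n → Fin n → MvPolynomial (Fin n) ℝ := fun i j =>
    X i ^ (2*β + 2*s + 4) * X j ^ (2*β) - X i ^ (2*β + 2*s + 2) * X j ^ (2*β + 2) with hg
  have hstep1 : psumPoly n (2*β + 2*s + 4) * psumPoly n (2*β)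
      - psumPoly n (2*β + 2*s + 2) * psumPoly n (2*β + 2)
      = ∑ i : Fin n, ∑ j ∈ Finset.univ.erase i, g i j := by
    rw [psum_mul, psum_mul,
      show 2*β + 2*s + 2 + (2*β + 2) = 2*β + 2*s + 4 + 2*β from by ring]
    have hPE : ∀ (P E₁ E₂ : MvPolynomial (Fin n) ℝ), P + E₁ - (P + E₂) = E₁ - E₂ :=
      fun _ _ _ => by ring
    rw [hPE, ← Finset.sum_sub_distrib]
    apply Finset.sum_congr rfl
    intro i _
    rw [← Finset.sum_sub_distrib]
  have hsym : (∑ i : Fin n, ∑ j ∈ Finset.univ.erase i, g i j)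
      = ∑ i : Fin n, ∑ j ∈ Finset.univ.erase i, g j i := by
    apply Finset.sum_comm'
    intro x y
    simp only [Finset.mem_univ, Finset.mem_erase, true_and, and_true]
    exact ⟨fun h => h.symm, fun h => h.symm⟩
  have hhalf : (∑ i : Fin n, ∑ j ∈ Finset.univ.erase i, g i j)
      = (2⁻¹ : ℝ) • ∑ i : Fin n, ∑ j ∈ Finset.univ.erase i, (g i j + g j i) := by
    have h3 : (∑ i : Fin n, ∑ j ∈ Finset.univ.erase i, (g i j + g j i))
        = (∑ i : Fin n, ∑ j ∈ Finset.univ.erase i, g i j)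
          + (∑ i : Fin n, ∑ j ∈ Finset.univ.erase i, g j i) := by
      rw [← Finset.sum_add_distrib]
      apply Finset.sum_congr rfl
      intro i _
      rw [← Finset.sum_add_distrib]
    rw [h3, ← hsym, ← two_smul ℝ, smul_smul]
    norm_num
  rw [hstep1, hhalf, Finset.smul_sum]
  apply isSumSq_sum
  intro i _
  rw [Finset.smul_sum]
  apply isSumSq_sum
  intro j _
  have hpair : g i j + g j i
      = ∑ w ∈ Finset.range (s+1),
        ((X i^2 - X j^2) * X i ^ (β + w) * X j ^ (β + (s - w)))
          * ((X i^2 - X j^2) * X i ^ (β + w) * X j ^ (β + (s - w))) := by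
    rw [← pair_identity (X i) (X j) β s, hg]
    ring
  rw [hpair, Finset.smul_sum]
  apply isSumSq_sum
  intro w _
  apply isSumSq_of_eq_sq
    (b := rhalf • ((X i^2 - X j^2) * X i ^ (β + w) * X j ^ (β + (s - w))))
  rw [smul_mul_smul_comm, rhalf_mul_self]

lemma key_transfer {a b : ℕ} (ha : Even a) (hb : Even b) (h4 : b + 4 ≤ a) :
    IsSumSq (psumPoly n a * psumPoly n b - psumPoly n (a - 2) * psumPoly n (b + 2)) := by
  obtain ⟨α, hα⟩ := ha
  obtain ⟨β, hβ⟩ := hb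
  have ec : a - 2 = 2*β + 2*(α - β - 2) + 2 := by omega
  have ea : a = 2*β + 2*(α - β - 2) + 4 := by omega
  have eb : b = 2*β := by omega
  rw [ec, ea, eb]
  exact key_transfer_core β (α - β - 2)

lemma step_evens {M N : Multiset ℕ} (h : Step M N) (hE : ∀ y ∈ M, Even y) :
    ∀ y ∈ N, Even y := by
  cases h with
  | merge a b S =>
    intro y hy
    rcases Multiset.mem_cons.mp hy with rfl | hy'
    · exact (hE a (Multiset.mem_cons_self ..)).add
        (hE b (Multiset.mem_cons_of_mem (Multiset.mem_cons_self ..)))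
    · exact hE y (Multiset.mem_cons_of_mem (Multiset.mem_cons_of_mem hy'))
  | transfer a b S h4 =>
    have hEa := hE a (Multiset.mem_cons_self ..)
    have hEb := hE b (Multiset.mem_cons_of_mem (Multiset.mem_cons_self ..))
    intro y hy
    rcases Multiset.mem_cons.mp hy with rfl | hy'
    · obtain ⟨α, hα⟩ := hEa
      exact ⟨α - 1, by omega⟩
    rcases Multiset.mem_cons.mp hy' with rfl | hy''
    · obtain ⟨β, hβ⟩ := hEb
      exact ⟨β + 1, by omega⟩
    · exact hE y (Multiset.mem_cons_of_mem (Multiset.mem_cons_of_mem hy''))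

lemma pp_cons (a : ℕ) (S : Multiset ℕ) : pp n (a ::ₘ S) = psumPoly n a * pp n S := by
  rw [pp, Multiset.map_cons, Multiset.prod_cons]; rfl

lemma step_sos {M N : Multiset ℕ} (h : Step M N) (hE : ∀ y ∈ M, Even y) :
    IsSumSq (pp n M - pp n N) := by
  cases h with
  | merge a b S =>
    have h1 : pp n (a ::ₘ b ::ₘ S) - pp n ((a + b) ::ₘ S)
        = (psumPoly n a * psumPoly n b - psumPoly n (a + b)) * pp n S := by
      rw [pp_cons, pp_cons, pp_cons]
      ring
    rw [h1]
    exact isSumSq_mul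
      (key_merge (hE a (Multiset.mem_cons_self ..))
        (hE b (Multiset.mem_cons_of_mem (Multiset.mem_cons_self ..))))
      (isSumSq_pp fun r hr =>
        hE r (Multiset.mem_cons_of_mem (Multiset.mem_cons_of_mem hr)))
  | transfer a b S h4 =>
    have h1 : pp n (a ::ₘ b ::ₘ S) - pp n ((a - 2) ::ₘ (b + 2) ::ₘ S)
        = (psumPoly n a * psumPoly n b - psumPoly n (a - 2) * psumPoly n (b + 2)) * pp n S := by
      rw [pp_cons, pp_cons, pp_cons, pp_cons]
      ring
    rw [h1]
    exact isSumSq_mul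
      (key_transfer (hE a (Multiset.mem_cons_self ..))
        (hE b (Multiset.mem_cons_of_mem (Multiset.mem_cons_self ..))) h4)
      (isSumSq_pp fun r hr =>
        hE r (Multiset.mem_cons_of_mem (Multiset.mem_cons_of_mem hr)))

lemma reach_sos {M N : Multiset ℕ} (h : Reach M N) (hE : ∀ y ∈ M, Even y) :
    IsSumSq (pp n M - pp n N) := by
  revert hE
  induction h using Relation.ReflTransGen.head_induction_on with
  | refl =>
    intro _
    simpa using (IsSumSq.zero : IsSumSq (0 : MvPolynomial (Fin n) ℝ))
  | @head K₁ K₂ hstep hreach ih =>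
    intro hE
    have hK₂E := step_evens hstep hE
    have h1 : pp n K₁ - pp n N = (pp n K₁ - pp n K₂) + (pp n K₂ - pp n N) := by ring
    rw [h1]
    exact (step_sos hstep hE).add (ih hK₂E)



lemma list_prod_nonneg' {l : List ℕ} {f : ℕ → ℝ} (h0 : ∀ r ∈ l, 0 ≤ f r) :
    0 ≤ (l.map f).prod := by
  apply List.prod_nonneg
  intro a ha
  obtain ⟨r, hr, rfl⟩ := List.mem_map.mp ha
  exact h0 r hr

lemma list_prod_le {l : List ℕ} {f G : ℕ → ℝ} (h0 : ∀ r ∈ l, 0 ≤ f r)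
    (h1 : ∀ r ∈ l, f r ≤ G r) : (l.map f).prod ≤ (l.map G).prod := by
  induction l with
  | nil => simp
  | cons a l ih =>
    simp only [List.map_cons, List.prod_cons]
    have hfa := h0 a (List.mem_cons_self ..)
    have hGa := hfa.trans (h1 a (List.mem_cons_self ..))
    apply mul_le_mul (h1 a (List.mem_cons_self ..))
      (ih (fun r hr => h0 r (List.mem_cons_of_mem _ hr))
        (fun r hr => h1 r (List.mem_cons_of_mem _ hr)))
      (list_prod_nonneg' (fun r hr => h0 r (List.mem_cons_of_mem _ hr))) hGa

lemma list_prod_pow (l : List ℕ) (e : ℕ → ℕ) (T : ℝ) :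
    (l.map fun r => T ^ (e r)).prod = T ^ ((l.map e).sum) := by
  induction l with
  | nil => simp
  | cons a l ih =>
    simp only [List.map_cons, List.prod_cons, List.sum_cons, pow_add, ih]

lemma list_prod_two_pow (l : List ℕ) (e : ℕ → ℕ) (T : ℝ) :
    (l.map fun r => 2 * T ^ (e r)).prod = 2 ^ l.length * T ^ ((l.map e).sum) := by
  induction l with
  | nil => simp
  | cons a l ih =>
    simp only [List.map_cons, List.prod_cons, List.sum_cons, List.length_cons, pow_add, ih,
      pow_succ]
    ring

lemma psum_spike (t c r nn : ℕ) (hnn : nn = t ^ c + 1) :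
    psum r (fun i : Fin nn => if i = ⟨0, by omega⟩ then (t : ℝ) else 1)
      = (t : ℝ) ^ r + (t : ℝ) ^ c := by
  subst hnn
  unfold psum
  have h1 : ∀ i : Fin (t ^ c + 1),
      (if i = ⟨0, by omega⟩ then (t : ℝ) else 1) ^ r
        = (if i = ⟨0, by omega⟩ then ((t : ℝ) ^ r - 1) else 0) + 1 := by
    intro i
    split
    · ring
    · rw [one_pow]; ring
  rw [Finset.sum_congr rfl (fun i _ => h1 i), Finset.sum_add_distrib]
  rw [Finset.sum_ite_eq' Finset.univ (⟨0, by omega⟩ : Fin (t ^ c + 1))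
    (fun _ => ((t : ℝ) ^ r - 1))]
  simp only [Finset.mem_univ, if_true, Finset.sum_const, Finset.card_univ, Fintype.card_fin,
    nsmul_eq_mul, mul_one]
  push_cast
  ring

lemma ppart_sorted {nn d : ℕ} (P : Nat.Partition d) (x : Fin nn → ℝ) :
    ppart P x = ((P.parts.sort (· ≤ ·)).map (fun r => psum r x)).prod := by
  rw [ppart]
  conv_lhs => rw [← Multiset.sort_eq P.parts (· ≤ ·)]
  rw [Multiset.map_coe, Multiset.prod_coe]

lemma sorted_getElem_le {l : List ℕ} (hs : l.Pairwise (· ≤ ·)) {i j : ℕ}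
    (hij : i ≤ j) (hj : j < l.length) :
    l[i]'(lt_of_le_of_lt hij hj) ≤ l[j]'hj := by
  rcases lt_or_eq_of_le hij with hlt | heq
  · exact List.pairwise_iff_getElem.mp hs i j _ hj hlt
  · subst heq
    exact le_refl _

/-- extraction of the min-sum domination from the positivity hypothesis -/
lemma smin_dom {d : ℕ} (lam mu : Nat.Partition (2 * d))
    (h : ∀ n : ℕ, 0 < n → ∀ x : Fin n → ℝ, ppart mu x ≤ ppart lam x)
    (hcard : Multiset.card mu.parts ≤ Multiset.card lam.parts)
    (k : ℕ) (hk : k < Multiset.card mu.parts) :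
    smin k lam.parts ≤ smin k mu.parts := by
  by_contra hlt
  push_neg at hlt
  set L := lam.parts.sort (· ≤ ·) with hL
  set Lm := mu.parts.sort (· ≤ ·) with hLm
  have hLlen : L.length = Multiset.card lam.parts := Multiset.length_sort _
  have hLmlen : Lm.length = Multiset.card mu.parts := Multiset.length_sort _
  have hkL : k < L.length := by omega
  have hkLm : k ≤ Lm.length := by omega
  set c := L[k]'hkL with hc
  set ℓ := L.length with hℓ
  set t := 2 ^ ℓ + 1 with ht
  set T := (t : ℝ) with hT
  have hT1 : (1 : ℝ) ≤ T := by
    rw [hT]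
    exact_mod_cast Nat.one_le_iff_ne_zero.mpr (by positivity)
  set nn := t ^ c + 1 with hnn
  have hnpos : 0 < nn := by positivity
  set x : Fin nn → ℝ := fun i => if i = ⟨0, by omega⟩ then (t : ℝ) else 1 with hx
  have hps : ∀ r, psum r x = T ^ r + T ^ c := fun r => psum_spike t c r nn rfl
  have hsorted : L.Pairwise (· ≤ ·) := Multiset.pairwise_sort _ _
  -- upper bound for lam
  have hElam : ppart lam x ≤ 2 ^ ℓ * T ^ ((L.map (fun r => max r c)).sum) := by
    rw [ppart_sorted, ← hL]
    calc (L.map (fun r => psum r x)).prod ≤ (L.map (fun r => 2 * T ^ (max r c))).prod := by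
          apply list_prod_le
          · intro r hr
            rw [hps r]
            positivity
          · intro r hr
            rw [hps r]
            have h1 : T ^ r ≤ T ^ (max r c) := pow_le_pow_right₀ hT1 (le_max_left ..)
            have h2 : T ^ c ≤ T ^ (max r c) := pow_le_pow_right₀ hT1 (le_max_right ..)
            linarith
    _ = 2 ^ ℓ * T ^ ((L.map (fun r => max r c)).sum) := by
          rw [list_prod_two_pow, hℓ]
  -- lower bound for mu
  have hEmu : T ^ (k * c + (Lm.drop k).sum) ≤ ppart mu x := by
    rw [ppart_sorted, ← hLm]
    have hsplit : Lm.map (fun r => psum r x)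
        = (Lm.take k).map (fun r => psum r x) ++ (Lm.drop k).map (fun r => psum r x) := by
      rw [← List.map_append, List.take_append_drop]
    rw [hsplit, List.prod_append]
    have h1 : T ^ (k * c) ≤ ((Lm.take k).map (fun r => psum r x)).prod := by
      have : ((Lm.take k).map (fun _ => T ^ c)).prod ≤ ((Lm.take k).map (fun r => psum r x)).prod := by
        apply list_prod_le
        · intro r _; positivity
        · intro r _
          rw [hps r]
          have : (0:ℝ) ≤ T ^ r := by positivity
          linarith
      rw [List.map_const', List.prod_replicate, List.length_take] at this
      have hlen : min k Lm.length = k := by omega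
      rw [hlen] at this
      calc T ^ (k * c) = (T ^ c) ^ k := by rw [← pow_mul, mul_comm]
      _ ≤ _ := this
    have h2 : T ^ ((Lm.drop k).sum) ≤ ((Lm.drop k).map (fun r => psum r x)).prod := by
      have : ((Lm.drop k).map (fun r => T ^ r)).prod ≤ ((Lm.drop k).map (fun r => psum r x)).prod := by
        apply list_prod_le
        · intro r _; positivity
        · intro r _
          rw [hps r]
          have : (0:ℝ) ≤ T ^ c := by positivity
          linarith
      rw [list_prod_pow, List.map_id'] at this
      exact this
    calc T ^ (k * c + (Lm.drop k).sum) = T ^ (k * c) * T ^ ((Lm.drop k).sum) := pow_add ..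
    _ ≤ _ := by
        apply mul_le_mul h1 h2 (by positivity)
        exact le_trans (by positivity) h1
  -- exponent comparison
  have hEcomp : (L.map (fun r => max r c)).sum + 1 ≤ k * c + (Lm.drop k).sum := by
    have hsplitL : (L.map (fun r => max r c)).sum
        = ((L.take k).map (fun r => max r c)).sum + ((L.drop k).map (fun r => max r c)).sum := by
      rw [← List.sum_append, ← List.map_append, List.take_append_drop]
    have htake : ∀ r ∈ L.take k, r ≤ c := by
      intro r hr
      obtain ⟨i, hi, rfl⟩ := List.mem_take_iff_getElem.mp hr
      have hik : i ≤ k := by omega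
      exact sorted_getElem_le hsorted hik (by omega)
    have hdrop : ∀ r ∈ L.drop k, c ≤ r := by
      intro r hr
      obtain ⟨i, hi, rfl⟩ := List.mem_drop_iff_getElem.mp hr
      have hik : k ≤ k + i := Nat.le_add_right ..
      exact sorted_getElem_le hsorted hik (by omega)
    have h1 : ((L.take k).map (fun r => max r c)).sum = k * c := by
      have : (L.take k).map (fun r => max r c) = (L.take k).map (fun _ => c) :=
        List.map_congr_left (fun r hr => by have := htake r hr; omega)
      rw [this, List.map_const', List.sum_replicate, List.length_take, smul_eq_mul]
      congr 1
      omega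
    have h2 : ((L.drop k).map (fun r => max r c)).sum = (L.drop k).sum := by
      have : (L.drop k).map (fun r => max r c) = (L.drop k).map (fun r => r) :=
        List.map_congr_left (fun r hr => by have := hdrop r hr; omega)
      rw [this, List.map_id']
    -- sums of parts
    have hsL : (L.take k).sum + (L.drop k).sum = 2 * d := by
      rw [List.sum_take_add_sum_drop]
      have : L.sum = lam.parts.sum := by
        conv_rhs => rw [← Multiset.sort_eq lam.parts (· ≤ ·)]
        rw [Multiset.sum_coe]
      rw [this, lam.parts_sum]
    have hsLm : (Lm.take k).sum + (Lm.drop k).sum = 2 * d := by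
      rw [List.sum_take_add_sum_drop]
      have : Lm.sum = mu.parts.sum := by
        conv_rhs => rw [← Multiset.sort_eq mu.parts (· ≤ ·)]
        rw [Multiset.sum_coe]
      rw [this, mu.parts_sum]
    have hm1 : smin k lam.parts = (L.take k).sum := rfl
    have hm2 : smin k mu.parts = (Lm.take k).sum := rfl
    omega
  -- final contradiction
  have hchain : T ^ ((L.map (fun r => max r c)).sum + 1) ≤ 2 ^ ℓ * T ^ ((L.map (fun r => max r c)).sum) := by
    calc T ^ ((L.map (fun r => max r c)).sum + 1)
        ≤ T ^ (k * c + (Lm.drop k).sum) := pow_le_pow_right₀ hT1 hEcomp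
    _ ≤ ppart mu x := hEmu
    _ ≤ ppart lam x := h nn hnpos x
    _ ≤ _ := hElam
  rw [pow_succ] at hchain
  have hTpos : (0:ℝ) < T ^ ((L.map (fun r => max r c)).sum) := by positivity
  have hle : T ≤ 2 ^ ℓ := by
    have h' : T * T ^ ((L.map (fun r => max r c)).sum)
        ≤ 2 ^ ℓ * T ^ ((L.map (fun r => max r c)).sum) := by
      rw [mul_comm]
      exact hchain
    exact le_of_mul_le_mul_right h' hTpos
  have : (2:ℝ) ^ ℓ = ((2 ^ ℓ : ℕ) : ℝ) := by push_cast; ring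
  rw [this, hT] at hle
  have := Nat.cast_le.mp hle
  omega



lemma card_le {d : ℕ} (lam mu : Nat.Partition (2 * d))
    (h : ∀ n : ℕ, 0 < n → ∀ x : Fin n → ℝ, ppart mu x ≤ ppart lam x) :
    Multiset.card mu.parts ≤ Multiset.card lam.parts := by
  have h2 := h 2 (by norm_num) (fun _ => 1)
  have hps : ∀ r : ℕ, psum r (fun _ : Fin 2 => (1:ℝ)) = 2 := by
    intro r
    unfold psum
    simp
  have hcompute : ∀ (P : Nat.Partition (2 * d)),
      ppart P (fun _ : Fin 2 => (1:ℝ)) = 2 ^ (Multiset.card P.parts) := by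
    intro P
    rw [ppart]
    rw [Multiset.map_congr rfl (fun r _ => hps r), Multiset.map_const',
      Multiset.prod_replicate]
  rw [hcompute lam, hcompute mu] at h2
  exact (pow_le_pow_iff_right₀ (by norm_num : (1:ℝ) < 2)).mp h2

theorem main_sos {d : ℕ} (hd : 0 < d) (lam mu : Nat.Partition (2 * d))
    (hlam : ∀ r ∈ lam.parts, Even r) (hmu : ∀ r ∈ mu.parts, Even r)
    (h : ∀ n : ℕ, 0 < n → ∀ x : Fin n → ℝ, ppart mu x ≤ ppart lam x) :
    ∀ n : ℕ, 0 < n → IsSOS (ppoly n lam - ppoly n mu) := by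
  intro n _
  have hcard := card_le lam mu h
  have hdom : ∀ k, k < Multiset.card mu.parts → smin k lam.parts ≤ smin k mu.parts :=
    fun k hk => smin_dom lam mu h hcard k hk
  have hreach : Reach lam.parts mu.parts :=
    reach_of_dominates lam.parts mu.parts hlam hmu
      (fun x hx => lam.parts_pos hx) (fun x hx => mu.parts_pos hx)
      (by rw [lam.parts_sum, mu.parts_sum]) hcard hdom
  have hsos : IsSumSq (pp n lam.parts - pp n mu.parts) := reach_sos hreach hlam
  have heq : ppoly n lam - ppoly n mu = pp n lam.parts - pp n mu.parts := rfl
  rw [heq]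
  exact isSumSq_isSOS hsos



end NSOS

/-- If `λ, μ` are even partitions of `2d` and `p_λ(x) ≥ p_μ(x)` for
every `n` and every `x ∈ ℝⁿ`, then `p_λ − p_μ` is a sum of squares for every `n`. -/
theorem nonneg_implies_sos {d : ℕ} (hd : 0 < d) (lam mu : Nat.Partition (2 * d))
    (hlam : ∀ r ∈ lam.parts, Even r) (hmu : ∀ r ∈ mu.parts, Even r)
    (h : ∀ n : ℕ, 0 < n → ∀ x : Fin n → ℝ, ppart mu x ≤ ppart lam x) :
    ∀ n : ℕ, 0 < n → IsSOS (ppoly n lam - ppoly n mu) :=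
  NSOS.main_sos hd lam mu hlam hmu h
end

section
/- Let K := {(a, b, c, d, e) ∈ ℝ^5 : the 2×2 matrices [[a, b], [b, d]] and [[b, c], [c, e]] are positive semidefinite and d − e ≥ 0}. Then a nonzero point r ∈ K spans an extreme ray of K if and only if r is a positive scalar multiple of a point of S := {(1, t², s·t², t⁴, s²·t²) : t ≥ 0, −t ≤ s ≤ t} ∪ {(0, 0, 0, 1, 0), (0, 0, 0, 1, 1)}. -/
open scoped BigOperators

/-- The spectrahedral cone `K ⊆ ℝ⁵`: points `(a, b, c, d, e)` such that the matrices
`[[a, b], [b, d]]` and `[[b, c], [c, e]]` are positive semidefinite and `d − e ≥ 0`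
(a real symmetric `2×2` matrix `[[a, b], [b, d]]` is psd iff `a ≥ 0`, `d ≥ 0` and
`a·d ≥ b²`). -/
def Kcone : Set (Fin 5 → ℝ) :=
  {p | 0 ≤ p 0 ∧ 0 ≤ p 3 ∧ p 1 ^ 2 ≤ p 0 * p 3 ∧
       0 ≤ p 1 ∧ 0 ≤ p 4 ∧ p 2 ^ 2 ≤ p 1 * p 4 ∧ p 4 ≤ p 3}

/-- The set `S = {(1, t², st², t⁴, s²t²) : t ≥ 0, −t ≤ s ≤ t} ∪ {(0,0,0,1,0), (0,0,0,1,1)}`. -/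
def Sset : Set (Fin 5 → ℝ) :=
  {r | ∃ t s : ℝ, 0 ≤ t ∧ -t ≤ s ∧ s ≤ t ∧
        r = ![1, t ^ 2, s * t ^ 2, t ^ 4, s ^ 2 * t ^ 2]} ∪
    {![0, 0, 0, 1, 0], ![0, 0, 0, 1, 1]}

lemma sq_cancel {u v : ℝ} (hu : 0 ≤ u) (hv : 0 ≤ v) (h : u^2 = v^2) : u = v :=
  le_antisymm (by nlinarith) (by nlinarith)

lemma split_psd {a1 b1 d1 a2 b2 d2 : ℝ} (ha1 : 0 ≤ a1) (hd1 : 0 ≤ d1)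
    (h1 : b1^2 ≤ a1*d1) (ha2 : 0 ≤ a2) (hd2 : 0 ≤ d2) (h2 : b2^2 ≤ a2*d2)
    (heq : (b1+b2)^2 = (a1+a2)*(d1+d2)) :
    b1^2 = a1*d1 ∧ b2^2 = a2*d2 ∧ a1*d2 = a2*d1 := by
  have hR : 0 ≤ a1*d2 + a2*d1 :=
    add_nonneg (mul_nonneg ha1 hd2) (mul_nonneg ha2 hd1)
  have h5 : (2*(b1*b2))^2 ≤ (a1*d2 + a2*d1)^2 := by
    nlinarith [sq_nonneg (a1*d2 - a2*d1), mul_le_mul h1 h2 (sq_nonneg b2) (mul_nonneg ha1 hd1)]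
  have hG : 2*(b1*b2) ≤ a1*d2 + a2*d1 := by nlinarith [h5, hR]
  have e1 : b1^2 = a1*d1 := by nlinarith
  have e2 : b2^2 = a2*d2 := by nlinarith
  have e3 : 2*(b1*b2) = a1*d2 + a2*d1 := by nlinarith
  refine ⟨e1, e2, ?_⟩
  nlinarith [sq_nonneg (a1*d2 - a2*d1)]

lemma key_gen {c t s a1 b1 c1 d1 e1 a2 b2 c2 d2 e2 : ℝ}
    (hc : 0 < c) (ht : 0 ≤ t)
    (ha1 : 0 ≤ a1) (hd1 : 0 ≤ d1) (hbd1 : b1^2 ≤ a1*d1) (hb1 : 0 ≤ b1)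
    (he1 : 0 ≤ e1) (hce1 : c1^2 ≤ b1*e1) (hed1 : e1 ≤ d1)
    (ha2 : 0 ≤ a2) (hd2 : 0 ≤ d2) (hbd2 : b2^2 ≤ a2*d2) (hb2 : 0 ≤ b2)
    (he2 : 0 ≤ e2) (hce2 : c2^2 ≤ b2*e2) (hed2 : e2 ≤ d2)
    (s0 : a1 + a2 = c) (s1 : b1 + b2 = c*t^2) (s2 : c1 + c2 = c*(s*t^2))
    (s3 : d1 + d2 = c*t^4) (s4 : e1 + e2 = c*(s^2*t^2)) :
    ∃ u : ℝ, 0 ≤ u ∧ a1 = u*c ∧ b1 = u*(c*t^2) ∧ c1 = u*(c*(s*t^2)) ∧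
      d1 = u*(c*t^4) ∧ e1 = u*(c*(s^2*t^2)) := by
  have hcne : c ≠ 0 := ne_of_gt hc
  have heq1 : (b1+b2)^2 = (a1+a2)*(d1+d2) := by rw [s0, s1, s3]; ring
  obtain ⟨hE1, hE2, hX⟩ := split_psd ha1 hd1 hbd1 ha2 hd2 hbd2 heq1
  have hd1' : d1 = a1 * t^4 := by
    have h : c * d1 = c * (a1 * t^4) := by linear_combination (-d1) * s0 + a1 * s3 - hX
    exact mul_left_cancel₀ hcne h
  have hd2' : d2 = a2 * t^4 := by
    have h : c * d2 = c * (a2 * t^4) := by linear_combination (-d2) * s0 + a2 * s3 + hX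
    exact mul_left_cancel₀ hcne h
  have hb1' : b1 = a1 * t^2 := by
    refine sq_cancel hb1 (mul_nonneg ha1 (sq_nonneg t)) ?_
    linear_combination hE1 + a1 * hd1'
  have hb2' : b2 = a2 * t^2 := by
    refine sq_cancel hb2 (mul_nonneg ha2 (sq_nonneg t)) ?_
    linear_combination hE2 + a2 * hd2'
  have main : c1 = a1 * (s*t^2) ∧ e1 = a1 * (s^2*t^2) := by
    by_cases ht0 : t = 0
    · subst ht0
      have hb10 : b1 = 0 := by rw [hb1']; ring
      have hc10 : c1 = 0 := by nlinarith [sq_nonneg c1]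
      have he10 : e1 = 0 := le_antisymm (by rw [hd1'] at hed1; nlinarith) he1
      constructor <;> (first | rw [hc10] | rw [he10]) <;> ring
    · have htpos : 0 < t := lt_of_le_of_ne ht (Ne.symm ht0)
      have htne : (t:ℝ)^2 ≠ 0 := pow_ne_zero 2 ht0
      have heq2 : (c1+c2)^2 = (b1+b2)*(e1+e2) := by rw [s1, s2, s4]; ring
      obtain ⟨hF1, hF2, hY⟩ := split_psd hb1 he1 hce1 hb2 he2 hce2 heq2
      have he1' : e1 = a1 * (s^2*t^2) := by
        have h : (c*t^2) * e1 = (c*t^2) * (a1 * (s^2*t^2)) := by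
          linear_combination (-e1)*s1 - hY + b1*s4 + (c*s^2*t^2)*hb1'
        exact mul_left_cancel₀ (mul_ne_zero hcne htne) h
      have he2' : e2 = a2 * (s^2*t^2) := by
        have h : (c*t^2) * e2 = (c*t^2) * (a2 * (s^2*t^2)) := by
          linear_combination (-e2)*s1 + hY + b2*s4 + (c*s^2*t^2)*hb2'
        exact mul_left_cancel₀ (mul_ne_zero hcne htne) h
      have hc1sq : c1^2 = (a1*(s*t^2))^2 := by
        linear_combination hF1 + e1*hb1' + (a1*t^2)*he1'
      by_cases hs0 : s = 0
      · have : c1 = 0 := by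
          have : c1^2 = 0 := by rw [hc1sq, hs0]; ring
          exact pow_eq_zero_iff (by norm_num) |>.mp this
        refine ⟨by rw [this, hs0]; ring, by rw [he1', hs0]⟩
      · have hc2sq : c2^2 = (a2*(s*t^2))^2 := by
          linear_combination hF2 + e2*hb2' + (a2*t^2)*he2'
        have hc2' : c2 = c*(s*t^2) - c1 := by linarith
        have ha2' : a2 = c - a1 := by linarith
        rw [hc2', ha2'] at hc2sq
        have hz : (c*(s*t^2)) * (c1 - a1*(s*t^2)) = 0 := by
          linear_combination (1/2)*hc1sq - (1/2)*hc2sq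
        have hne : c*(s*t^2) ≠ 0 := mul_ne_zero hcne (mul_ne_zero hs0 htne)
        have : c1 - a1*(s*t^2) = 0 := by
          rcases mul_eq_zero.mp hz with h | h
          · exact absurd h hne
          · exact h
        exact ⟨by linarith, he1'⟩
  obtain ⟨hc1', he1'⟩ := main
  refine ⟨a1/c, div_nonneg ha1 (le_of_lt hc), by field_simp, ?_, ?_, ?_, ?_⟩
  · rw [hb1']; field_simp
  · rw [hc1']; field_simp
  · rw [hd1']; field_simp
  · rw [he1']; field_simp

lemma zero_parts {a1 a2 : ℝ} (h : a1 + a2 = 0) (h1 : 0 ≤ a1) (h2 : 0 ≤ a2) :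
    a1 = 0 ∧ a2 = 0 := ⟨by linarith, by linarith⟩

lemma sq_zero {a : ℝ} (h : a^2 ≤ 0) : a = 0 := by nlinarith [sq_nonneg a]

lemma abs_le_of_sq {a b : ℝ} (hb : 0 ≤ b) (h : a^2 ≤ b^2) : -b ≤ a ∧ a ≤ b :=
  ⟨by nlinarith, by nlinarith⟩

set_option maxHeartbeats 2000000

/-- A nonzero point `r ∈ K` spans an extreme ray of `K` iff `r` is a
positive scalar multiple of a point of `S`. -/
theorem extreme_rays_of_K (r : Fin 5 → ℝ) (hrK : r ∈ Kcone) (hr : r ≠ 0) :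
    (∀ x ∈ Kcone, ∀ y ∈ Kcone, r = x + y →
        (∃ s : ℝ, 0 ≤ s ∧ x = s • r) ∧ (∃ t : ℝ, 0 ≤ t ∧ y = t • r)) ↔
      ∃ c : ℝ, 0 < c ∧ ∃ p ∈ Sset, r = c • p := by
  obtain ⟨ha, hd, hbd, hb, he, hce, hed⟩ := hrK
  constructor
  · intro hext
    by_cases ha0 : r 0 = 0
    · -- first case: a = 0
      have hb0 : r 1 = 0 := sq_zero (by calc r 1^2 ≤ r 0 * r 3 := hbd
        _ ≤ 0 := by rw [ha0]; ring_nf; exact le_refl 0)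
      have hc0 : r 2 = 0 := sq_zero (by calc r 2^2 ≤ r 1 * r 4 := hce
        _ ≤ 0 := by rw [hb0]; ring_nf; exact le_refl 0)
      have hd0 : 0 < r 3 := by
        rcases lt_or_eq_of_le hd with h | h
        · exact h
        · exfalso; apply hr
          have h4 : r 4 = 0 := le_antisymm (by linarith) he
          funext i; fin_cases i <;> simp <;>
            first
            | exact ha0
            | exact hb0
            | exact hc0
            | exact h.symm
            | exact h4
      have hkey : r 4 = 0 ∨ r 4 = r 3 := by
        by_contra hcon
        push_neg at hcon
        obtain ⟨h40, h43⟩ := hcon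
        have h4pos : 0 < r 4 := lt_of_le_of_ne he (Ne.symm h40)
        have mem1 : ![0, 0, 0, r 4, r 4] ∈ Kcone := by
          refine ⟨?_, ?_, ?_, ?_, ?_, ?_, ?_⟩ <;> simp <;> first | exact he | positivity
        have mem2 : ![0, 0, 0, r 3 - r 4, 0] ∈ Kcone := by
          refine ⟨?_, ?_, ?_, ?_, ?_, ?_, ?_⟩ <;> simp <;> linarith
        have hsum : r = ![0, 0, 0, r 4, r 4] + ![0, 0, 0, r 3 - r 4, 0] := by
          funext i; fin_cases i <;> simp <;> first | exact ha0 | exact hb0 | exact hc0 | ring_nf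
        obtain ⟨⟨u, hu, hux⟩, -⟩ := hext _ mem1 _ mem2 hsum
        have e3 := congrFun hux 3
        have e4 := congrFun hux 4
        simp at e3 e4
        -- e3 : r 4 = u * r 3, e4 : r 4 = u * r 4
        have hu1 : u = 1 := by
          have h : (u - 1) * r 4 = 0 := by linear_combination -e4
          rcases mul_eq_zero.mp h with h | h
          · linarith
          · exact absurd h (ne_of_gt h4pos)
        rw [hu1] at e3
        exact h43 (by linarith)
      rcases hkey with h | h
      · refine ⟨r 3, hd0, ![0, 0, 0, 1, 0], Or.inr (Set.mem_insert _ _), ?_⟩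
        funext i; fin_cases i <;> simp <;> first | exact ha0 | exact hb0 | exact hc0 | exact h
      · refine ⟨r 3, hd0, ![0, 0, 0, 1, 1], Or.inr (Set.mem_insert_of_mem _ rfl), ?_⟩
        funext i; fin_cases i <;> simp <;> first | exact ha0 | exact hb0 | exact hc0 | exact h
    · -- a > 0
      have hapos : 0 < r 0 := lt_of_le_of_ne ha (Ne.symm ha0)
      have hbdeq : r 1^2 = r 0 * r 3 := by
        by_contra hne
        have hlt : r 1^2 < r 0 * r 3 := lt_of_le_of_ne hbd hne
        have hd3 : 0 < r 3 := by nlinarith [sq_nonneg (r 1)]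
        have mem1 : ![r 1^2/r 3, r 1, r 2, r 3, r 4] ∈ Kcone := by
          refine ⟨?_, ?_, ?_, ?_, ?_, ?_, ?_⟩ <;> simp <;>
            first
            | positivity
            | exact hb | exact he | exact hed | exact hd
            | (rw [div_mul_cancel₀]; exact ne_of_gt hd3)
            | exact hce
        have mem2 : ![r 0 - r 1^2/r 3, 0, 0, 0, 0] ∈ Kcone := by
          refine ⟨?_, ?_, ?_, ?_, ?_, ?_, ?_⟩ <;> simp
          rw [div_le_iff₀ hd3]; linarith
        have hsum : r = ![r 1^2/r 3, r 1, r 2, r 3, r 4] + ![r 0 - r 1^2/r 3, 0, 0, 0, 0] := by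
          funext i; fin_cases i <;> simp
        obtain ⟨-, u, hu, huy⟩ := hext _ mem1 _ mem2 hsum
        have e3 := congrFun huy 3
        have e0 := congrFun huy 0
        simp at e3 e0
        -- e3 : 0 = u * r 3
        have hu0 : u = 0 := by
          rcases e3 with h | h
          · exact h
          · exact absurd h (ne_of_gt hd3)
        rw [hu0] at e0
        apply hne
        field_simp at e0
        linarith
      have hcbeq : r 2^2 = r 1 * r 4 := by
        by_contra hne
        have hlt : r 2^2 < r 1 * r 4 := lt_of_le_of_ne hce hne
        have hb1 : 0 < r 1 := by nlinarith [sq_nonneg (r 2)]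
        have he1 : 0 < r 4 := by nlinarith [sq_nonneg (r 2)]
        have hB2 : (Real.sqrt (r 1 * r 4))^2 = r 1 * r 4 := Real.sq_sqrt (by positivity)
        set B := Real.sqrt (r 1 * r 4) with hBdef
        have hB0 : 0 ≤ B := Real.sqrt_nonneg _
        have habs : |r 2| < B := by nlinarith [abs_nonneg (r 2), sq_abs (r 2)]
        set δ := (B - |r 2|)/2 with hδdef
        have hδ0 : 0 < δ := by rw [hδdef]; linarith
        have key1 : (r 2/2 + δ)^2 ≤ r 1/2 * (r 4/2) := by
          nlinarith [le_abs_self (r 2), neg_abs_le (r 2), sq_abs (r 2), abs_nonneg (r 2)]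
        have key2 : (r 2/2 - δ)^2 ≤ r 1/2 * (r 4/2) := by
          nlinarith [le_abs_self (r 2), neg_abs_le (r 2), sq_abs (r 2), abs_nonneg (r 2)]
        have mem1 : ![r 0/2, r 1/2, r 2/2 + δ, r 3/2, r 4/2] ∈ Kcone := by
          refine ⟨?_, ?_, ?_, ?_, ?_, ?_, ?_⟩ <;> simp <;> first | linarith | nlinarith
        have mem2 : ![r 0/2, r 1/2, r 2/2 - δ, r 3/2, r 4/2] ∈ Kcone := by
          refine ⟨?_, ?_, ?_, ?_, ?_, ?_, ?_⟩ <;> simp <;> first | linarith | nlinarith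
        have hsum : r = ![r 0/2, r 1/2, r 2/2 + δ, r 3/2, r 4/2] +
            ![r 0/2, r 1/2, r 2/2 - δ, r 3/2, r 4/2] := by
          funext i; fin_cases i <;> simp <;> ring_nf
        obtain ⟨⟨u, hu, hux⟩, -⟩ := hext _ mem1 _ mem2 hsum
        have e0 := congrFun hux 0
        have e2 := congrFun hux 2
        simp at e0 e2
        have hu2 : u = 1/2 := by
          have h : (u - 1/2) * r 0 = 0 := by linear_combination -e0
          rcases mul_eq_zero.mp h with h | h
          · linarith
          · exact absurd h ha0
        rw [hu2] at e2
        linarith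
      by_cases hb1 : r 1 = 0
      · have h3 : r 3 = 0 := by
          have h : r 0 * r 3 = 0 := by rw [← hbdeq, hb1]; ring
          rcases mul_eq_zero.mp h with h | h
          · exact absurd h ha0
          · exact h
        have h4 : r 4 = 0 := le_antisymm (by linarith) he
        have h2 : r 2 = 0 := sq_zero (by calc r 2^2 ≤ r 1 * r 4 := hce
          _ ≤ 0 := by rw [hb1]; ring_nf; exact le_refl 0)
        refine ⟨r 0, hapos, ![1, (0:ℝ)^2, 0*(0:ℝ)^2, (0:ℝ)^4, (0:ℝ)^2*(0:ℝ)^2],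
          Or.inl ⟨0, 0, le_refl 0, by norm_num, by norm_num, rfl⟩, ?_⟩
        funext i; fin_cases i <;> simp <;>
          first | exact hb1 | exact h2 | exact h3 | exact h4
      · have hbpos : 0 < r 1 := lt_of_le_of_ne hb (Ne.symm hb1)
        have hb1' : r 1 ≠ 0 := ne_of_gt hbpos
        have hT2 : (Real.sqrt (r 1 / r 0))^2 = r 1 / r 0 := Real.sq_sqrt (by positivity)
        set T := Real.sqrt (r 1 / r 0) with hTdef
        have hT0 : 0 ≤ T := Real.sqrt_nonneg _
        set S := r 2 / r 1 with hSdef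
        have hS2T : S^2 ≤ T^2 := by
          rw [hT2, hSdef, div_pow, div_le_div_iff₀ (by positivity) hapos]
          have h1 : r 2^2 * r 0 = r 0 * r 1 * r 4 := by linear_combination r 0 * hcbeq
          have h2 : r 1 * r 1^2 = r 0 * r 1 * r 3 := by linear_combination r 1 * hbdeq
          nlinarith [mul_le_mul_of_nonneg_left hed (le_of_lt (mul_pos hapos hbpos))]
        obtain ⟨hS1, hS2⟩ := abs_le_of_sq hT0 hS2T
        refine ⟨r 0, hapos, ![1, T^2, S*T^2, T^4, S^2*T^2],
          Or.inl ⟨T, S, hT0, hS1, hS2, rfl⟩, ?_⟩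
        funext i; fin_cases i
        · simp
        · simp [hT2]; field_simp
        · simp [hT2]; rw [hSdef]; field_simp
        · simp [show T^4 = (T^2)^2 by ring, hT2]; field_simp; linear_combination -hbdeq
        · simp [hT2]; rw [hSdef]; field_simp; linear_combination -hcbeq
  · rintro H
    obtain ⟨c, hc, p, hpS, rfl⟩ := H
    intro x hx y hy hxy
    obtain ⟨xa, xd, xbd, xb, xe, xce, xed⟩ := hx
    obtain ⟨ya, yd, ybd, yb, ye, yce, yed⟩ := hy
    simp only [Sset, Set.mem_union, Set.mem_setOf_eq, Set.mem_insert_iff,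
      Set.mem_singleton_iff] at hpS
    rcases hpS with ⟨t, s, ht, hs1, hs2, rfl⟩ | rfl | rfl
    · -- generic case
      have s0 : x 0 + y 0 = c := by
        have h := congrFun hxy 0; simp at h; linear_combination -h
      have s1 : x 1 + y 1 = c * t^2 := by
        have h := congrFun hxy 1; simp at h; linear_combination -h
      have s2 : x 2 + y 2 = c * (s*t^2) := by
        have h := congrFun hxy 2; simp at h; linear_combination -h
      have s3 : x 3 + y 3 = c * t^4 := by
        have h := congrFun hxy 3; simp at h; linear_combination -h
      have s4 : x 4 + y 4 = c * (s^2*t^2) := by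
        have h := congrFun hxy 4; simp at h; linear_combination -h
      obtain ⟨u, hu, g0, g1, g2, g3, g4⟩ := key_gen hc ht xa xd xbd xb xe xce xed
        ya yd ybd yb ye yce yed s0 s1 s2 s3 s4
      obtain ⟨v, hv, f0, f1, f2, f3, f4⟩ := key_gen hc ht ya yd ybd yb ye yce yed
        xa xd xbd xb xe xce xed
        (show y 0 + x 0 = c by linarith)
        (show y 1 + x 1 = c*t^2 by linarith)
        (show y 2 + x 2 = c*(s*t^2) by linarith)
        (show y 3 + x 3 = c*t^4 by linarith)
        (show y 4 + x 4 = c*(s^2*t^2) by linarith)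
      constructor
      · refine ⟨u, hu, ?_⟩
        funext i; fin_cases i
        · simp; linear_combination g0
        · simp; linear_combination g1
        · simp; linear_combination g2
        · simp; linear_combination g3
        · simp; linear_combination g4
      · refine ⟨v, hv, ?_⟩
        funext i; fin_cases i
        · simp; linear_combination f0
        · simp; linear_combination f1
        · simp; linear_combination f2
        · simp; linear_combination f3
        · simp; linear_combination f4
    · -- p = (0,0,0,1,0)
      have h0 := congrFun hxy 0; have h1 := congrFun hxy 1; have h2 := congrFun hxy 2
      have h3 := congrFun hxy 3; have h4 := congrFun hxy 4
      simp at h0 h1 h2 h3 h4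
      have hx0 : x 0 = 0 := by linarith
      have hy0 : y 0 = 0 := by linarith
      have hx1 : x 1 = 0 := sq_zero (by calc x 1^2 ≤ x 0 * x 3 := xbd
        _ ≤ 0 := by rw [hx0]; ring_nf; exact le_refl 0)
      have hy1 : y 1 = 0 := sq_zero (by calc y 1^2 ≤ y 0 * y 3 := ybd
        _ ≤ 0 := by rw [hy0]; ring_nf; exact le_refl 0)
      have hx2 : x 2 = 0 := sq_zero (by calc x 2^2 ≤ x 1 * x 4 := xce
        _ ≤ 0 := by rw [hx1]; ring_nf; exact le_refl 0)
      have hy2 : y 2 = 0 := sq_zero (by calc y 2^2 ≤ y 1 * y 4 := yce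
        _ ≤ 0 := by rw [hy1]; ring_nf; exact le_refl 0)
      have hx4 : x 4 = 0 := by linarith
      have hy4 : y 4 = 0 := by linarith
      constructor
      · refine ⟨x 3 / c, div_nonneg xd hc.le, ?_⟩
        funext i; fin_cases i <;> simp [hx0, hx1, hx2, hx4] <;> field_simp
      · refine ⟨y 3 / c, div_nonneg yd hc.le, ?_⟩
        funext i; fin_cases i <;> simp [hy0, hy1, hy2, hy4] <;> field_simp
    · -- p = (0,0,0,1,1)
      have h0 := congrFun hxy 0; have h1 := congrFun hxy 1; have h2 := congrFun hxy 2
      have h3 := congrFun hxy 3; have h4 := congrFun hxy 4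
      simp at h0 h1 h2 h3 h4
      have hx0 : x 0 = 0 := by linarith
      have hy0 : y 0 = 0 := by linarith
      have hx1 : x 1 = 0 := sq_zero (by calc x 1^2 ≤ x 0 * x 3 := xbd
        _ ≤ 0 := by rw [hx0]; ring_nf; exact le_refl 0)
      have hy1 : y 1 = 0 := sq_zero (by calc y 1^2 ≤ y 0 * y 3 := ybd
        _ ≤ 0 := by rw [hy0]; ring_nf; exact le_refl 0)
      have hx2 : x 2 = 0 := sq_zero (by calc x 2^2 ≤ x 1 * x 4 := xce
        _ ≤ 0 := by rw [hx1]; ring_nf; exact le_refl 0)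
      have hy2 : y 2 = 0 := sq_zero (by calc y 2^2 ≤ y 1 * y 4 := yce
        _ ≤ 0 := by rw [hy1]; ring_nf; exact le_refl 0)
      have hx43 : x 4 = x 3 := by linarith
      have hy43 : y 4 = y 3 := by linarith
      constructor
      · refine ⟨x 3 / c, div_nonneg xd hc.le, ?_⟩
        funext i; fin_cases i <;> simp [hx0, hx1, hx2, hx43] <;> field_simp
      · refine ⟨y 3 / c, div_nonneg yd hc.le, ?_⟩
        funext i; fin_cases i <;> simp [hy0, hy1, hy2, hy43] <;> field_simp
end

section
/- Let M_d ⊆ ℝ^d be the closure of the set {(p_1(x), p_2(x), …, p_d(x)) : n a positive integer, x ∈ ℝ^n}, and let N_d ⊆ ℝ^d be the closure of the set {(p_2(x), p_4(x), …, p_{2d}(x)) : n a positive integer, x ∈ ℝ^n}. Then both M_d and N_d are closed under addition (u, v ∈ S implies u + v ∈ S) and under coordinatewise (Hadamard) multiplication (u, v ∈ S implies (u_1·v_1, …, u_d·v_d) ∈ S). -/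
open scoped BigOperators

/-- `M_d`: the closure of the image at infinity of the Vandermonde map,
i.e. of `{(p₁(x), …, p_d(x)) : n ≥ 1, x ∈ ℝⁿ}`. -/
def Mcell (d : ℕ) : Set (Fin d → ℝ) :=
  closure {y | ∃ n : ℕ, 0 < n ∧ ∃ x : Fin n → ℝ,
    ∀ k : Fin d, y k = ∑ i, x i ^ ((k : ℕ) + 1)}

/-- `N_d`: the Vandermonde cell, the closure of
`{(p₂(x), p₄(x), …, p_{2d}(x)) : n ≥ 1, x ∈ ℝⁿ}`. -/
def Ncell (d : ℕ) : Set (Fin d → ℝ) :=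
  closure {y | ∃ n : ℕ, 0 < n ∧ ∃ x : Fin n → ℝ,
    ∀ k : Fin d, y k = ∑ i, x i ^ (2 * ((k : ℕ) + 1))}

/-! Concatenating two point configurations adds their power sums, and taking all pairwise
products of their points multiplies them, since `∑ᵢ ∑ⱼ (xᵢ yⱼ)ᵉ = (∑ᵢ xᵢᵉ)(∑ⱼ yⱼᵉ)`.
Both operations are continuous, so they pass to the closures. -/

def powerSumImage (R : Type*) [CommSemiring R] {ι : Type*} (e : ι → ℕ) : Set (ι → R) :=
  {y | ∃ n : ℕ, 0 < n ∧ ∃ x : Fin n → R, ∀ k, y k = ∑ i, x i ^ e k}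

namespace powerSumImage

variable {R : Type*} [CommSemiring R] {ι : Type*} {e : ι → ℕ} {u v : ι → R}

theorem add_mem (hu : u ∈ powerSumImage R e) (hv : v ∈ powerSumImage R e) :
    u + v ∈ powerSumImage R e := by
  obtain ⟨n, hn, x, hx⟩ := hu
  obtain ⟨m, -, y, hy⟩ := hv
  refine ⟨n + m, by omega, Fin.append x y, fun k => ?_⟩
  simp only [Pi.add_apply, hx k, hy k, Fin.sum_univ_add, Fin.append_left, Fin.append_right]

theorem mul_mem (hu : u ∈ powerSumImage R e) (hv : v ∈ powerSumImage R e) :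
    u * v ∈ powerSumImage R e := by
  obtain ⟨n, hn, x, hx⟩ := hu
  obtain ⟨m, hm, y, hy⟩ := hv
  let xy : Fin n × Fin m → R := fun p => x p.1 * y p.2
  refine ⟨n * m, Nat.mul_pos hn hm, xy ∘ finProdFinEquiv.symm, fun k => ?_⟩
  calc (u * v) k = (∑ i, x i ^ e k) * ∑ j, y j ^ e k := by rw [Pi.mul_apply, hx k, hy k]
    _ = ∑ p, xy p ^ e k := by simp only [xy, mul_pow, Fintype.sum_prod_type, Finset.sum_mul_sum]
    _ = ∑ i, (xy ∘ finProdFinEquiv.symm) i ^ e k :=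
      (finProdFinEquiv.symm.sum_comp fun p => xy p ^ e k).symm

variable [TopologicalSpace R] [IsTopologicalSemiring R]

theorem add_mem_closure (hu : u ∈ closure (powerSumImage R e))
    (hv : v ∈ closure (powerSumImage R e)) : u + v ∈ closure (powerSumImage R e) :=
  map_mem_closure₂ continuous_add hu hv fun _ ha _ hb => add_mem ha hb

theorem mul_mem_closure (hu : u ∈ closure (powerSumImage R e))
    (hv : v ∈ closure (powerSumImage R e)) : u * v ∈ closure (powerSumImage R e) :=
  map_mem_closure₂ continuous_mul hu hv fun _ ha _ hb => mul_mem ha hb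

end powerSumImage

/-- Both `M_d` and `N_d` are closed under addition and under
coordinatewise (Hadamard) multiplication. -/
theorem Mcell_Ncell_add_hadamard (d : ℕ) :
    (∀ u ∈ Mcell d, ∀ v ∈ Mcell d,
        u + v ∈ Mcell d ∧ (fun k => u k * v k) ∈ Mcell d) ∧
    (∀ u ∈ Ncell d, ∀ v ∈ Ncell d,
        u + v ∈ Ncell d ∧ (fun k => u k * v k) ∈ Ncell d) := by
  have hM : Mcell d = closure (powerSumImage ℝ fun k : Fin d => (k : ℕ) + 1) := rfl
  have hN : Ncell d = closure (powerSumImage ℝ fun k : Fin d => 2 * ((k : ℕ) + 1)) := rfl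
  rw [hM, hN]
  open powerSumImage in
  exact ⟨fun u hu v hv => ⟨add_mem_closure hu hv, mul_mem_closure hu hv⟩,
    fun u hu v hv => ⟨add_mem_closure hu hv, mul_mem_closure hu hv⟩⟩
end

section
/- Let n be a positive integer, I ⊊ {1, …, n} nonempty, m ∈ {1, …, n} \ I, let c_i > 0 for i ∈ I, and set d := Σ_{i ∈ I} c_i. Then the set C := {x ∈ ℝ^n : x_j ≥ 0 for all j, and Π_{i ∈ I} x_i^{c_i} ≥ x_m^d} is a convex cone: it is closed under addition and under multiplication by nonnegative scalars. -/
/-!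
Write `d = ∑ i ∈ I, c i` and `w i = c i / d`. Taking `d`-th roots, the defining inequality reads
`x m ≤ G x` for the weighted geometric mean `G x = ∏ i ∈ I, x i ^ w i`. Since the weights sum to
one, `G` is positively homogeneous, and it is superadditive: weighted AM–GM applied to the
ratios `x i / (x i + y i)` and `y i / (x i + y i)` gives
`G x + G y ≤ (∑ w i * (x i + y i) / (x i + y i)) * G (x + y) = G (x + y)`.
-/

open scoped BigOperators

/-- The set of nonnegative solutions of the binomial inequality
`Π_{i ∈ I} x_i^{c_i} ≥ x_m^d` with `d = Σ_{i ∈ I} c_i` (real powers). -/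
noncomputable def binomialCone {n : ℕ} (I : Finset (Fin n)) (m : Fin n)
    (c : Fin n → ℝ) : Set (Fin n → ℝ) :=
  {x | (∀ j, 0 ≤ x j) ∧ x m ^ (∑ i ∈ I, c i) ≤ ∏ i ∈ I, x i ^ c i}

open Finset Real

section GeometricMean

variable {ι : Type*} (s : Finset ι) {w : ι → ℝ}

lemma prod_rpow_le_sum_mul_div_mul_prod_rpow (hw : ∀ i ∈ s, 0 ≤ w i)
    (hw1 : ∑ i ∈ s, w i = 1) {z u : ι → ℝ} (hz : ∀ i ∈ s, 0 ≤ z i) (hu : ∀ i ∈ s, 0 < u i) :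
    ∏ i ∈ s, z i ^ w i ≤ (∑ i ∈ s, w i * (z i / u i)) * ∏ i ∈ s, u i ^ w i := by
  have hU : 0 < ∏ i ∈ s, u i ^ w i := prod_pos fun i hi => rpow_pos_of_pos (hu i hi) _
  have hratio : ∏ i ∈ s, (z i / u i) ^ w i = (∏ i ∈ s, z i ^ w i) / ∏ i ∈ s, u i ^ w i := by
    rw [← prod_div_distrib]
    exact prod_congr rfl fun i hi => div_rpow (hz i hi) (hu i hi).le _
  calc ∏ i ∈ s, z i ^ w i = (∏ i ∈ s, (z i / u i) ^ w i) * ∏ i ∈ s, u i ^ w i := by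
        rw [hratio, div_mul_cancel₀ _ hU.ne']
    _ ≤ _ := by
        gcongr
        exact geom_mean_le_arith_mean_weighted s w _ hw hw1
          fun i hi => div_nonneg (hz i hi) (hu i hi).le

lemma prod_rpow_add_prod_rpow_le (hw : ∀ i ∈ s, 0 < w i) (hw1 : ∑ i ∈ s, w i = 1)
    {x y : ι → ℝ} (hx : ∀ i ∈ s, 0 ≤ x i) (hy : ∀ i ∈ s, 0 ≤ y i) :
    ∏ i ∈ s, x i ^ w i + ∏ i ∈ s, y i ^ w i ≤ ∏ i ∈ s, (x i + y i) ^ w i := by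
  have hw0 : ∀ i ∈ s, 0 ≤ w i := fun i hi => (hw i hi).le
  by_cases hpos : ∀ i ∈ s, 0 < x i + y i
  · have hratios : ∑ i ∈ s, w i * (x i / (x i + y i)) + ∑ i ∈ s, w i * (y i / (x i + y i)) = 1 := by
      rw [← sum_add_distrib, ← hw1]
      refine sum_congr rfl fun i hi => ?_
      rw [← mul_add, ← add_div, div_self (hpos i hi).ne', mul_one]
    calc ∏ i ∈ s, x i ^ w i + ∏ i ∈ s, y i ^ w i
        ≤ (∑ i ∈ s, w i * (x i / (x i + y i))) * ∏ i ∈ s, (x i + y i) ^ w i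
          + (∑ i ∈ s, w i * (y i / (x i + y i))) * ∏ i ∈ s, (x i + y i) ^ w i :=
          add_le_add (prod_rpow_le_sum_mul_div_mul_prod_rpow s hw0 hw1 hx hpos)
            (prod_rpow_le_sum_mul_div_mul_prod_rpow s hw0 hw1 hy hpos)
      _ = ∏ i ∈ s, (x i + y i) ^ w i := by rw [← add_mul, hratios, one_mul]
  · push Not at hpos
    obtain ⟨i, hi, hle⟩ := hpos
    have hxi : x i = 0 := by linarith [hx i hi, hy i hi]
    have hyi : y i = 0 := by linarith [hx i hi, hy i hi]
    have hzero : ∀ z : ι → ℝ, z i = 0 → ∏ j ∈ s, z j ^ w j = 0 := fun z hz =>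
      prod_eq_zero hi (by rw [hz, zero_rpow (hw i hi).ne'])
    rw [hzero x hxi, hzero y hyi, add_zero]
    exact prod_nonneg fun j hj => rpow_nonneg (add_nonneg (hx j hj) (hy j hj)) _

lemma prod_mul_rpow_of_sum_eq_one (hw : ∀ i ∈ s, 0 ≤ w i) (hw1 : ∑ i ∈ s, w i = 1)
    {t : ℝ} (ht : 0 ≤ t) {z : ι → ℝ} (hz : ∀ i ∈ s, 0 ≤ z i) :
    ∏ i ∈ s, (t * z i) ^ w i = t * ∏ i ∈ s, z i ^ w i := by
  rw [prod_congr rfl fun i hi => mul_rpow ht (hz i hi), prod_mul_distrib,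
    ← rpow_sum_of_nonneg ht hw, hw1, rpow_one]

end GeometricMean

lemma prod_rpow_div_rpow {ι : Type*} (s : Finset ι) {c z : ι → ℝ} {d : ℝ} (hd : d ≠ 0)
    (hz : ∀ i ∈ s, 0 ≤ z i) :
    (∏ i ∈ s, z i ^ (c i / d)) ^ d = ∏ i ∈ s, z i ^ c i := by
  rw [← finsetProd_rpow s _ fun i hi => rpow_nonneg (hz i hi) _]
  exact prod_congr rfl fun i hi => by rw [← rpow_mul (hz i hi), div_mul_cancel₀ _ hd]

lemma mem_binomialCone_iff {n : ℕ} {I : Finset (Fin n)} {m : Fin n} {c : Fin n → ℝ}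
    (hd : 0 < ∑ i ∈ I, c i) {x : Fin n → ℝ} :
    x ∈ binomialCone I m c ↔
      (∀ j, 0 ≤ x j) ∧ x m ≤ ∏ i ∈ I, x i ^ (c i / ∑ j ∈ I, c j) := by
  refine and_congr_right fun hx => ?_
  rw [← rpow_le_rpow_iff (hx m) (prod_nonneg fun i _ => rpow_nonneg (hx i) _) hd,
    prod_rpow_div_rpow I hd.ne' fun i _ => hx i]

theorem binomialCone_convex_cone_general {n : ℕ} (I : Finset (Fin n))
    (hI : I.Nonempty) (m : Fin n) (c : Fin n → ℝ) (hc : ∀ i ∈ I, 0 < c i) :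
    (∀ x ∈ binomialCone I m c, ∀ y ∈ binomialCone I m c,
        x + y ∈ binomialCone I m c) ∧
    (∀ x ∈ binomialCone I m c, ∀ t : ℝ, 0 ≤ t → t • x ∈ binomialCone I m c) := by
  have hd : 0 < ∑ i ∈ I, c i := sum_pos hc hI
  have hw : ∀ i ∈ I, 0 < c i / ∑ j ∈ I, c j := fun i hi => div_pos (hc i hi) hd
  have hw1 : ∑ i ∈ I, c i / ∑ j ∈ I, c j = 1 := by rw [← sum_div, div_self hd.ne']
  simp only [mem_binomialCone_iff hd]
  constructor
  · rintro x ⟨hx0, hx⟩ y ⟨hy0, hy⟩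
    refine ⟨fun j => add_nonneg (hx0 j) (hy0 j), ?_⟩
    exact (add_le_add hx hy).trans
      (prod_rpow_add_prod_rpow_le I hw hw1 (fun i _ => hx0 i) fun i _ => hy0 i)
  · rintro x ⟨hx0, hx⟩ t ht
    refine ⟨fun j => mul_nonneg ht (hx0 j), ?_⟩
    simp only [Pi.smul_apply, smul_eq_mul]
    rw [prod_mul_rpow_of_sum_eq_one I (fun i hi => (hw i hi).le) hw1 ht fun i _ => hx0 i]
    exact mul_le_mul_of_nonneg_left hx ht

/-- For a nonempty proper subset `I ⊊ {1, …, n}`, `m ∉ I`, and weights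
`c_i > 0` (`i ∈ I`) with `d = Σ_{i ∈ I} c_i`, the set
`C = {x ∈ ℝ≥0ⁿ : Π_{i ∈ I} x_i^{c_i} ≥ x_m^d}` is a convex cone:
closed under addition and under multiplication by nonnegative scalars. -/
theorem binomialCone_convex_cone {n : ℕ} (hn : 0 < n) (I : Finset (Fin n))
    (hI : I.Nonempty) (hIproper : I ≠ Finset.univ) (m : Fin n) (hm : m ∉ I)
    (c : Fin n → ℝ) (hc : ∀ i ∈ I, 0 < c i) :
    (∀ x ∈ binomialCone I m c, ∀ y ∈ binomialCone I m c,
        x + y ∈ binomialCone I m c) ∧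
    (∀ x ∈ binomialCone I m c, ∀ t : ℝ, 0 ≤ t → t • x ∈ binomialCone I m c) :=
  binomialCone_convex_cone_general I hI m c hc
end

section
/- Let d ≥ 2 and let N_d ⊆ ℝ^d be the Vandermonde cell. Then trop(N_d) = {y ∈ ℝ^d : y_k + y_{k+2} ≥ 2·y_{k+1} for all k = 1, …, d−2, and d·y_{d−1} ≥ (d−1)·y_d}. -/
open Filter Real


open scoped BigOperators

/-- The tropicalization of a set `S ⊆ ℝ^d`: the set of limits
`lim log(x⁽ᵐ⁾)/log(1/τ_m)` where `x⁽ᵐ⁾ ∈ S` has strictly positive coordinates and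
`τ_m ∈ (0, 1)` tends to `0`. -/
def trop {d : ℕ} (S : Set (Fin d → ℝ)) : Set (Fin d → ℝ) :=
  {y | ∃ (x : ℕ → Fin d → ℝ) (τ : ℕ → ℝ),
    (∀ m, x m ∈ S) ∧ (∀ m i, 0 < x m i) ∧ (∀ m, τ m ∈ Set.Ioo (0 : ℝ) 1) ∧
    Filter.Tendsto τ Filter.atTop (nhds 0) ∧
    ∀ i, Filter.Tendsto (fun m => Real.log (x m i) / Real.log (1 / τ m))
      Filter.atTop (nhds (y i))}



def Vset (d : ℕ) : Set (Fin d → ℝ) :=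
  {y | ∃ n : ℕ, 0 < n ∧ ∃ x : Fin n → ℝ,
    ∀ k : Fin d, y k = ∑ i, x i ^ (2 * ((k : ℕ) + 1))}

lemma Vset_zero (d : ℕ) : (0 : Fin d → ℝ) ∈ Vset d := by
  refine ⟨1, one_pos, 0, fun k => ?_⟩
  simp

lemma Vset_add {d : ℕ} {a b : Fin d → ℝ} (ha : a ∈ Vset d) (hb : b ∈ Vset d) :
    a + b ∈ Vset d := by
  obtain ⟨n, hn, x, hx⟩ := ha
  obtain ⟨n', hn', x', hx'⟩ := hb
  refine ⟨n + n', by omega, Fin.append x x', fun k => ?_⟩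
  simp [Fin.sum_univ_add, Fin.append_left, Fin.append_right, Pi.add_apply, hx k, hx' k]

lemma Vset_atom {d : ℕ} (n : ℕ) (hn : 0 < n) (t : ℝ) :
    (fun k : Fin d => (n : ℝ) * t ^ (2 * ((k : ℕ) + 1))) ∈ Vset d :=
  ⟨n, hn, fun _ => t, fun k => by simp [Finset.sum_const, nsmul_eq_mul]⟩

lemma pow_ineq1 {n : ℕ} (x : Fin n → ℝ) (a : ℕ) :
    (∑ i, x i ^ (2 * (a + 2))) ^ 2
      ≤ (∑ i, x i ^ (2 * (a + 1))) * (∑ i, x i ^ (2 * (a + 3))) := by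
  have h := Finset.sum_mul_sq_le_sq_mul_sq Finset.univ
    (fun i => x i ^ (a + 1)) (fun i => x i ^ (a + 3))
  have e1 : ∀ i : Fin n, x i ^ (a + 1) * x i ^ (a + 3) = x i ^ (2 * (a + 2)) := by
    intro i; rw [← pow_add]; congr 1; omega
  have e2 : ∀ i : Fin n, (x i ^ (a + 1)) ^ 2 = x i ^ (2 * (a + 1)) := by
    intro i; rw [← pow_mul]; congr 1; omega
  have e3 : ∀ i : Fin n, (x i ^ (a + 3)) ^ 2 = x i ^ (2 * (a + 3)) := by
    intro i; rw [← pow_mul]; congr 1; omega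
  simpa only [e1, e2, e3] using h

lemma pow_ineq2 {n : ℕ} (hn : 0 < n) (t : Fin n → ℝ) (ht : ∀ i, 0 ≤ t i) (e : ℕ) :
    (∑ i, t i ^ (e + 1)) ^ e ≤ (∑ i, t i ^ e) ^ (e + 1) := by
  have hne : (Finset.univ : Finset (Fin n)).Nonempty := by
    refine Finset.univ_nonempty_iff.mpr ?_
    exact Fin.pos_iff_nonempty.mp hn
  obtain ⟨i0, -, hi0⟩ := Finset.exists_max_image Finset.univ t hne
  have hS : 0 ≤ ∑ i, t i ^ e := Finset.sum_nonneg fun i _ => pow_nonneg (ht i) e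
  have h1 : ∑ i, t i ^ (e + 1) ≤ (∑ i, t i ^ e) * t i0 := by
    rw [Finset.sum_mul]
    refine Finset.sum_le_sum fun i _ => ?_
    calc t i ^ (e + 1) = t i ^ e * t i := by ring
    _ ≤ t i ^ e * t i0 :=
        mul_le_mul_of_nonneg_left (hi0 i (Finset.mem_univ i)) (pow_nonneg (ht i) e)
  have h2 : t i0 ^ e ≤ ∑ i, t i ^ e :=
    Finset.single_le_sum (fun i _ => pow_nonneg (ht i) e) (Finset.mem_univ i0)
  have h0 : 0 ≤ ∑ i, t i ^ (e + 1) := Finset.sum_nonneg fun i _ => pow_nonneg (ht i) _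
  calc (∑ i, t i ^ (e + 1)) ^ e ≤ ((∑ i, t i ^ e) * t i0) ^ e := pow_le_pow_left₀ h0 h1 e
  _ = (∑ i, t i ^ e) ^ e * t i0 ^ e := mul_pow _ _ _
  _ ≤ (∑ i, t i ^ e) ^ e * ∑ i, t i ^ e :=
      mul_le_mul_of_nonneg_left h2 (pow_nonneg hS e)
  _ = (∑ i, t i ^ e) ^ (e + 1) := by ring

def Cset (d : ℕ) : Set (Fin d → ℝ) :=
  {y | (∀ i j l : Fin d, (j : ℕ) = (i : ℕ) + 1 → (l : ℕ) = (i : ℕ) + 2 →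
          y j ^ 2 ≤ y i * y l) ∧
       (∀ i j : Fin d, (i : ℕ) = d - 2 → (j : ℕ) = d - 1 →
          y j ^ (d - 1) ≤ y i ^ d)}

lemma isClosed_Cset (d : ℕ) : IsClosed (Cset d) := by
  have : Cset d =
      (⋂ i : Fin d, ⋂ j : Fin d, ⋂ l : Fin d,
        {y : Fin d → ℝ | (j : ℕ) = (i : ℕ) + 1 → (l : ℕ) = (i : ℕ) + 2 →
          y j ^ 2 ≤ y i * y l}) ∩
      (⋂ i : Fin d, ⋂ j : Fin d,
        {y : Fin d → ℝ | (i : ℕ) = d - 2 → (j : ℕ) = d - 1 →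
          y j ^ (d - 1) ≤ y i ^ d}) := by
    ext y; simp [Cset, Set.mem_iInter]
  rw [this]
  refine IsClosed.inter ?_ ?_
  · refine isClosed_iInter fun i => isClosed_iInter fun j => isClosed_iInter fun l => ?_
    by_cases h1 : (j : ℕ) = (i : ℕ) + 1
    · by_cases h2 : (l : ℕ) = (i : ℕ) + 2
      · simp only [h1, h2, forall_true_left]
        exact isClosed_le (by fun_prop) (by fun_prop)
      · simp only [h2]; simp
    · simp only [h1]; simp
  · refine isClosed_iInter fun i => isClosed_iInter fun j => ?_
    by_cases h1 : (i : ℕ) = d - 2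
    · by_cases h2 : (j : ℕ) = d - 1
      · simp only [h1, h2, forall_true_left]
        exact isClosed_le (by fun_prop) (by fun_prop)
      · simp only [h2]; simp
    · simp only [h1]; simp

lemma Vset_subset_Cset (d : ℕ) (hd : 2 ≤ d) : Vset d ⊆ Cset d := by
  rintro y ⟨n, hn, x, hx⟩
  constructor
  · intro i j l hj hl
    rw [hx i, hx j, hx l, hj, hl]
    have := pow_ineq1 x ((i : ℕ) + 0)
    have e1 : (i : ℕ) + 0 + 2 = (i : ℕ) + 1 + 1 := by omega
    have e2 : (i : ℕ) + 0 + 1 = (i : ℕ) + 1 := by omega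
    have e3 : (i : ℕ) + 0 + 3 = (i : ℕ) + 2 + 1 := by omega
    rw [e1, e2, e3] at this
    exact this
  · intro i j hi hj
    rw [hx i, hx j, hi, hj]
    have key := pow_ineq2 hn (fun i => x i ^ 2) (fun i => sq_nonneg (x i)) (d - 1)
    have e1 : ∀ i : Fin n, (x i ^ 2) ^ (d - 1 + 1) = x i ^ (2 * (d - 1 + 1)) := by
      intro i; rw [← pow_mul]
    have e2 : ∀ i : Fin n, (x i ^ 2) ^ (d - 1) = x i ^ (2 * (d - 2 + 1)) := by
      intro i; rw [← pow_mul]; congr 1; omega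
    simp only [e1, e2] at key
    have e3 : d - 1 + 1 = d := by omega
    rw [e3] at key
    have e4 : 2 * (d - 1 + 1) = 2 * d := by omega
    rw [e4]
    exact key

section lines
variable {d : ℕ} (Z s : ℕ → ℝ)

lemma smono (hZs : ∀ k, Z (k+1) = Z k + s k)
    (hstep : ∀ k, k + 2 < d → s k ≤ s (k+1)) :
    ∀ j k, j ≤ k → k + 1 < d → s j ≤ s k := by
  intro j k
  induction k with
  | zero =>
    intro hjk _
    have h0 : j = 0 := by omega
    subst h0; exact le_rfl
  | succ k ih =>
    intro hjk hk
    rcases Nat.eq_or_lt_of_le hjk with h | h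
    · exact le_of_eq (by rw [h])
    · exact le_trans (ih (by omega) (by omega)) (hstep k hk)

lemma line_aux1 (hZs : ∀ k, Z (k+1) = Z k + s k)
    (hstep : ∀ k, k + 2 < d → s k ≤ s (k+1)) :
    ∀ n j, j + 1 < d → j + n < d →
      (Z j - ((j:ℝ)+1) * s j) + (((j:ℝ)+(n:ℝ))+1) * s j ≤ Z (j + n) := by
  intro n
  induction n with
  | zero => intro j _ _; simp
  | succ n ih =>
    intro j hj hjn
    have h1 : j + n < d := by omega
    have h2 := ih j hj h1
    have h3 : s j ≤ s (j + n) := smono Z s hZs hstep j (j+n) (Nat.le_add_right _ _) hjn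
    have h4 : Z (j + n + 1) = Z (j + n) + s (j + n) := hZs (j + n)
    have h5 : j + (n + 1) = (j + n) + 1 := by omega
    rw [h5, h4]
    push_cast
    linarith

lemma line_aux2 (hZs : ∀ k, Z (k+1) = Z k + s k)
    (hstep : ∀ k, k + 2 < d → s k ≤ s (k+1)) :
    ∀ n k, k + n + 1 < d →
      (Z (k+n) - (((k:ℝ)+(n:ℝ))+1) * s (k+n)) + ((k:ℝ)+1) * s (k+n) ≤ Z k := by
  intro n
  induction n with
  | zero => intro k _; simp
  | succ n ih =>
    intro k hk
    have e : k + 1 + n = k + (n + 1) := by omega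
    have h2 := ih (k+1) (by omega)
    rw [e] at h2
    have h3 : s k ≤ s (k + (n+1)) := smono Z s hZs hstep k (k+(n+1)) (by omega) (by omega)
    have h4 : Z (k + 1) = Z k + s k := hZs k
    push_cast at h2 ⊢
    linarith

lemma line_le (hZs : ∀ k, Z (k+1) = Z k + s k)
    (hstep : ∀ k, k + 2 < d → s k ≤ s (k+1)) :
    ∀ j k, j + 1 < d → k < d →
      (Z j - ((j:ℝ)+1) * s j) + ((k:ℝ)+1) * s j ≤ Z k := by
  intro j k hj hk
  rcases le_or_gt j k with h | h
  · obtain ⟨n, rfl⟩ := Nat.exists_eq_add_of_le h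
    have := line_aux1 Z s hZs hstep n j hj hk
    push_cast at this ⊢
    linarith
  · obtain ⟨n, rfl⟩ := Nat.exists_eq_add_of_le h.le
    have := line_aux2 Z s hZs hstep n k (by omega)
    push_cast at this ⊢
    linarith

lemma c_nonneg (hd : 2 ≤ d) (hZs : ∀ k, Z (k+1) = Z k + s k)
    (hstep : ∀ k, k + 2 < d → s k ≤ s (k+1))
    (hlastZ : ((d:ℝ)-1) * Z (d-1) ≤ (d:ℝ) * Z (d-2)) :
    ∀ j, j + 1 < d → 0 ≤ Z j - ((j:ℝ)+1) * s j := by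
  have hbase : 0 ≤ Z (d-2) - (((d-2:ℕ):ℝ)+1) * s (d-2) := by
    have e1 : d - 2 + 1 = d - 1 := by omega
    have h4 := hZs (d-2)
    rw [e1] at h4
    have e2 : ((d-2:ℕ):ℝ) = (d:ℝ) - 2 := by
      push_cast [Nat.cast_sub hd]; ring
    rw [e2]
    have hd2 : (2:ℝ) ≤ (d:ℝ) := by exact_mod_cast hd
    nlinarith [hlastZ]
  have hstepc : ∀ j, j + 2 < d →
      Z (j+1) - (((j+1:ℕ):ℝ)+1) * s (j+1) ≤ Z j - ((j:ℝ)+1) * s j := by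
    intro j h
    have h1 : s j ≤ s (j+1) := hstep j h
    have h4 : Z (j+1) = Z j + s j := hZs j
    have h2 : ((j:ℝ)+2) * s j ≤ ((j:ℝ)+2) * s (j+1) :=
      mul_le_mul_of_nonneg_left h1 (by positivity)
    push_cast
    linarith
  -- downward induction
  have aux : ∀ n j, j + n = d - 2 → 0 ≤ Z j - ((j:ℝ)+1) * s j := by
    intro n
    induction n with
    | zero =>
      intro j hj
      have : j = d - 2 := by omega
      subst this
      exact hbase
    | succ n ih =>
      intro j hj
      have h1 : j + 2 < d := by omega
      have h2 := ih (j+1) (by omega)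
      have h3 := hstepc j h1
      push_cast at h2 h3 ⊢
      linarith
  intro j hj
  exact aux (d - 2 - j) j (by omega)

end lines

lemma Ncell_subset_Cset (d : ℕ) (hd : 2 ≤ d) : Ncell d ⊆ Cset d :=
  closure_minimal (Vset_subset_Cset d hd) (isClosed_Cset d)

lemma trop_subset (d : ℕ) (hd : 2 ≤ d) :
    trop (Ncell d) ⊆
      {y : Fin d → ℝ |
        (∀ i j l : Fin d, (j : ℕ) = (i : ℕ) + 1 → (l : ℕ) = (i : ℕ) + 2 →
          2 * y j ≤ y i + y l) ∧
        (∀ i j : Fin d, (i : ℕ) = d - 2 → (j : ℕ) = d - 1 →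
          ((d : ℝ) - 1) * y j ≤ (d : ℝ) * y i)} := by
  rintro y ⟨x, τ, hmem, hpos, hτ, -, hlim⟩
  have hC : ∀ m, x m ∈ Cset d := fun m => Ncell_subset_Cset d hd (hmem m)
  have hL : ∀ m, 0 < Real.log (1 / τ m) := by
    intro m
    rw [one_div, Real.log_inv]
    have := Real.log_neg (hτ m).1 (hτ m).2
    linarith
  constructor
  · intro i j l hj hl
    have hle : ∀ m, 2 * (Real.log (x m j) / Real.log (1 / τ m)) ≤
        Real.log (x m i) / Real.log (1 / τ m) + Real.log (x m l) / Real.log (1 / τ m) := by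
      intro m
      have h1 : (x m j) ^ 2 ≤ x m i * x m l := (hC m).1 i j l hj hl
      have h2 : Real.log ((x m j) ^ 2) ≤ Real.log (x m i * x m l) :=
        Real.log_le_log (pow_pos (hpos m j) 2) h1
      rw [Real.log_pow, Real.log_mul (ne_of_gt (hpos m i)) (ne_of_gt (hpos m l))] at h2
      rw [← add_div, ← mul_div_assoc]
      refine div_le_div_of_nonneg_right ?_ (hL m).le
      push_cast at h2; linarith
    exact le_of_tendsto_of_tendsto' (Filter.Tendsto.const_mul 2 (hlim j))
      ((hlim i).add (hlim l)) hle
  · intro i j hi hj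
    have hle : ∀ m, ((d : ℝ) - 1) * (Real.log (x m j) / Real.log (1 / τ m)) ≤
        (d : ℝ) * (Real.log (x m i) / Real.log (1 / τ m)) := by
      intro m
      have h1 : (x m j) ^ (d - 1) ≤ (x m i) ^ d := (hC m).2 i j hi hj
      have h2 : Real.log ((x m j) ^ (d - 1)) ≤ Real.log ((x m i) ^ d) :=
        Real.log_le_log (pow_pos (hpos m j) (d-1)) h1
      rw [Real.log_pow, Real.log_pow] at h2
      have hcast : ((d - 1 : ℕ) : ℝ) = (d : ℝ) - 1 := by
        push_cast [Nat.cast_sub (by omega : 1 ≤ d)]; ring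
      rw [hcast] at h2
      rw [← mul_div_assoc, ← mul_div_assoc]
      exact div_le_div_of_nonneg_right h2 (hL m).le
    exact le_of_tendsto_of_tendsto' (Filter.Tendsto.const_mul _ (hlim j))
      (Filter.Tendsto.const_mul _ (hlim i)) hle

lemma subset_trop (d : ℕ) (hd : 2 ≤ d) :
    {y : Fin d → ℝ |
        (∀ i j l : Fin d, (j : ℕ) = (i : ℕ) + 1 → (l : ℕ) = (i : ℕ) + 2 →
          2 * y j ≤ y i + y l) ∧
        (∀ i j : Fin d, (i : ℕ) = d - 2 → (j : ℕ) = d - 1 →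
          ((d : ℝ) - 1) * y j ≤ (d : ℝ) * y i)} ⊆ trop (Ncell d) := by
  rintro y ⟨hconv, hlast⟩
  -- ℕ-indexed coordinates
  set Z : ℕ → ℝ := fun k => if h : k < d then y ⟨k, h⟩ else 0 with hZdef
  have hyZ : ∀ (t : ℕ) (ht : t < d), y ⟨t, ht⟩ = Z t := by
    intro t ht; simp [hZdef, dif_pos ht]
  have hyZ' : ∀ k : Fin d, y k = Z (k : ℕ) := by
    intro k; rw [← hyZ (k : ℕ) k.isLt]
  set s : ℕ → ℝ := fun k => Z (k+1) - Z k with hsdef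
  set c : ℕ → ℝ := fun j => Z j - ((j:ℝ)+1) * s j with hcdef
  have hZs : ∀ k, Z (k+1) = Z k + s k := by intro k; simp [hsdef]
  have hstep : ∀ k, k + 2 < d → s k ≤ s (k+1) := by
    intro k h
    have h1 := hconv ⟨k, by omega⟩ ⟨k+1, by omega⟩ ⟨k+2, by omega⟩ rfl rfl
    rw [hyZ k (by omega), hyZ (k+1) (by omega), hyZ (k+2) (by omega)] at h1
    simp only [hsdef]
    linarith
  have hlastZ : ((d:ℝ)-1) * Z (d-1) ≤ (d:ℝ) * Z (d-2) := by
    have h1 := hlast ⟨d-2, by omega⟩ ⟨d-1, by omega⟩ rfl rfl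
    rwa [hyZ (d-2) (by omega), hyZ (d-1) (by omega)] at h1
  have hcnn : ∀ j, j + 1 < d → 0 ≤ c j :=
    c_nonneg Z s hd hZs hstep hlastZ
  have hlin : ∀ j k, j + 1 < d → k < d → c j + ((k:ℝ)+1) * s j ≤ Z k :=
    line_le Z s hZs hstep
  -- the approximating sequence
  set L : ℕ → ℝ := fun m => (m:ℝ) + 1 with hLdef
  have hLpos : ∀ m, 0 < L m := by intro m; simp [hLdef]; positivity
  set τ : ℕ → ℝ := fun m => Real.exp (-(L m)) with hτdef
  have hlogτ : ∀ m, Real.log (1 / τ m) = L m := by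
    intro m; rw [hτdef]; rw [one_div, ← Real.exp_neg, neg_neg, Real.log_exp]
  set nj : ℕ → ℕ → ℕ := fun m j => ⌈Real.exp (L m * c j)⌉₊ with hnjdef
  have hnjpos : ∀ m j, 0 < nj m j := by
    intro m j; exact Nat.ceil_pos.mpr (Real.exp_pos _)
  have hnj_lb : ∀ m j, Real.exp (L m * c j) ≤ (nj m j : ℝ) := by
    intro m j; exact Nat.le_ceil _
  have hnj_ub : ∀ m (j : ℕ), j + 1 < d → (nj m j : ℝ) ≤ 2 * Real.exp (L m * c j) := by
    intro m j hj
    have h1 : (1:ℝ) ≤ Real.exp (L m * c j) :=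
      Real.one_le_exp (mul_nonneg (hLpos m).le (hcnn j hj))
    have h2 := Nat.ceil_lt_add_one (Real.exp_pos (L m * c j)).le
    simp only [hnjdef]
    linarith
  set X : ℕ → Fin d → ℝ := fun m => ∑ j : Fin (d-1),
      (fun k : Fin d => ((nj m j : ℕ) : ℝ) *
        (Real.exp (L m * s (j:ℕ) / 2)) ^ (2 * ((k : ℕ) + 1))) with hXdef
  have hterm : ∀ m (j : ℕ) (k : Fin d),
      (Real.exp (L m * s j / 2)) ^ (2 * ((k : ℕ) + 1)) =
        Real.exp (L m * (((k:ℕ):ℝ)+1) * s j) := by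
    intro m j k
    rw [← Real.exp_nat_mul]
    congr 1
    push_cast
    ring
  have hXval : ∀ m (k : Fin d),
      X m k = ∑ j : Fin (d-1), ((nj m (j:ℕ) : ℕ) : ℝ) *
        Real.exp (L m * (((k:ℕ):ℝ)+1) * s (j:ℕ)) := by
    intro m k
    simp only [hXdef, Finset.sum_apply]
    exact Finset.sum_congr rfl fun j _ => by rw [hterm]
  have hdd : 0 < d - 1 := by omega
  have hlb : ∀ m (k : Fin d), Real.exp (L m * Z (k:ℕ)) ≤ X m k := by
    intro m k
    rw [hXval]
    set j0 : Fin (d-1) := ⟨min (k:ℕ) (d-2), by omega⟩ with hj0def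
    have hj0 : c (j0:ℕ) + (((k:ℕ):ℝ)+1) * s (j0:ℕ) = Z (k:ℕ) := by
      rcases le_or_gt (k:ℕ) (d-2) with h | h
      · have e : (j0:ℕ) = (k:ℕ) := min_eq_left h
        rw [e]
        simp only [hcdef]
        ring
      · have hk : (k:ℕ) = d - 1 := by have := k.isLt; omega
        have e : (j0:ℕ) = d - 2 := min_eq_right (by omega)
        rw [e, hk]
        have e1 : d - 2 + 1 = d - 1 := by omega
        have h4 := hZs (d-2)
        rw [e1] at h4
        have e2 : ((d-2:ℕ):ℝ) = (d:ℝ) - 2 := by push_cast [Nat.cast_sub hd]; ring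
        have e3 : ((d-1:ℕ):ℝ) = (d:ℝ) - 1 := by
          push_cast [Nat.cast_sub (by omega : 1 ≤ d)]; ring
        simp only [hcdef]
        rw [e2, e3]
        linarith
    have e : Real.exp (L m * Z (k:ℕ)) =
        Real.exp (L m * c (j0:ℕ)) * Real.exp (L m * (((k:ℕ):ℝ)+1) * s (j0:ℕ)) := by
      rw [← Real.exp_add]
      congr 1
      rw [← hj0]
      ring
    have h1 : Real.exp (L m * Z (k:ℕ)) ≤
        ((nj m (j0:ℕ) : ℕ):ℝ) * Real.exp (L m * (((k:ℕ):ℝ)+1) * s (j0:ℕ)) := by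
      rw [e]
      exact mul_le_mul_of_nonneg_right (hnj_lb m _) (Real.exp_pos _).le
    refine le_trans h1 ?_
    exact Finset.single_le_sum
      (f := fun j : Fin (d-1) => ((nj m (j:ℕ) : ℕ):ℝ) *
        Real.exp (L m * (((k:ℕ):ℝ)+1) * s (j:ℕ)))
      (fun j _ => by positivity) (Finset.mem_univ j0)
  have hub : ∀ m (k : Fin d),
      X m k ≤ ((d:ℝ) - 1) * (2 * Real.exp (L m * Z (k:ℕ))) := by
    intro m k
    rw [hXval]
    have hstep1 : ∀ j : Fin (d-1),
        ((nj m (j:ℕ) : ℕ):ℝ) * Real.exp (L m * (((k:ℕ):ℝ)+1) * s (j:ℕ)) ≤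
          2 * Real.exp (L m * Z (k:ℕ)) := by
      intro j
      have hjd : (j:ℕ) + 1 < d := by have := j.isLt; omega
      have h1 : ((nj m (j:ℕ) : ℕ):ℝ) * Real.exp (L m * (((k:ℕ):ℝ)+1) * s (j:ℕ)) ≤
          (2 * Real.exp (L m * c (j:ℕ))) * Real.exp (L m * (((k:ℕ):ℝ)+1) * s (j:ℕ)) :=
        mul_le_mul_of_nonneg_right (hnj_ub m (j:ℕ) hjd) (Real.exp_pos _).le
      have h2 : (2 * Real.exp (L m * c (j:ℕ))) * Real.exp (L m * (((k:ℕ):ℝ)+1) * s (j:ℕ))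
          = 2 * Real.exp (L m * (c (j:ℕ) + (((k:ℕ):ℝ)+1) * s (j:ℕ))) := by
        rw [mul_assoc, ← Real.exp_add]
        ring_nf
      have h3 : Real.exp (L m * (c (j:ℕ) + (((k:ℕ):ℝ)+1) * s (j:ℕ))) ≤
          Real.exp (L m * Z (k:ℕ)) := by
        apply Real.exp_le_exp.mpr
        exact mul_le_mul_of_nonneg_left (hlin (j:ℕ) (k:ℕ) hjd k.isLt) (hLpos m).le
      calc ((nj m (j:ℕ) : ℕ):ℝ) * Real.exp (L m * (((k:ℕ):ℝ)+1) * s (j:ℕ))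
          ≤ 2 * Real.exp (L m * (c (j:ℕ) + (((k:ℕ):ℝ)+1) * s (j:ℕ))) := by
            rw [← h2]; exact h1
      _ ≤ 2 * Real.exp (L m * Z (k:ℕ)) := by linarith
    calc (∑ j : Fin (d-1), ((nj m (j:ℕ) : ℕ):ℝ) *
          Real.exp (L m * (((k:ℕ):ℝ)+1) * s (j:ℕ)))
        ≤ ∑ _j : Fin (d-1), 2 * Real.exp (L m * Z (k:ℕ)) :=
          Finset.sum_le_sum fun j _ => hstep1 j
    _ = ((d:ℝ) - 1) * (2 * Real.exp (L m * Z (k:ℕ))) := by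
        rw [Finset.sum_const, Finset.card_univ, Fintype.card_fin, nsmul_eq_mul]
        congr 1
        push_cast [Nat.cast_sub (by omega : 1 ≤ d)]
        ring
  have hXpos : ∀ m (k : Fin d), 0 < X m k :=
    fun m k => lt_of_lt_of_le (Real.exp_pos _) (hlb m k)
  -- membership
  have hXmem : ∀ m, X m ∈ Vset d := by
    intro m
    rw [hXdef]
    refine Finset.sum_induction _ (· ∈ Vset d) (fun a b ha hb => Vset_add ha hb)
      (Vset_zero d) (fun j _ => ?_)
    exact Vset_atom _ (hnjpos m (j:ℕ)) _
  refine ⟨X, τ, fun m => subset_closure (hXmem m), fun m k => hXpos m k, ?_, ?_, ?_⟩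
  · intro m
    constructor
    · exact Real.exp_pos _
    · rw [hτdef]
      exact Real.exp_lt_one_iff.mpr (by simpa using (hLpos m))
  · have h1 : Filter.Tendsto L Filter.atTop Filter.atTop := by
      rw [hLdef]
      exact Filter.tendsto_atTop_add_const_right _ 1 tendsto_natCast_atTop_atTop
    have h2 : Filter.Tendsto (fun m => -(L m)) Filter.atTop Filter.atBot :=
      Filter.tendsto_neg_atBot_iff.mpr h1
    exact Real.tendsto_exp_atBot.comp h2
  · intro k
    rw [hyZ' k]
    have hC : (0:ℝ) < 2 * ((d:ℝ) - 1) := by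
      have : (2:ℝ) ≤ (d:ℝ) := by exact_mod_cast hd
      nlinarith
    set C : ℝ := Real.log (2 * ((d:ℝ) - 1)) with hCdef
    have hLtop : Filter.Tendsto L Filter.atTop Filter.atTop := by
      rw [hLdef]
      exact Filter.tendsto_atTop_add_const_right _ 1 tendsto_natCast_atTop_atTop
    have hup : ∀ m, Real.log (X m k) / Real.log (1 / τ m) ≤ Z (k:ℕ) + C / L m := by
      intro m
      rw [hlogτ m]
      have h1 : Real.log (X m k) ≤ C + L m * Z (k:ℕ) := by
        have hb : X m k ≤ (2 * ((d:ℝ) - 1)) * Real.exp (L m * Z (k:ℕ)) := by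
          calc X m k ≤ ((d:ℝ) - 1) * (2 * Real.exp (L m * Z (k:ℕ))) := hub m k
          _ = (2 * ((d:ℝ) - 1)) * Real.exp (L m * Z (k:ℕ)) := by ring
        have h2 := Real.log_le_log (hXpos m k) hb
        rw [Real.log_mul (ne_of_gt hC) (Real.exp_ne_zero _), Real.log_exp] at h2
        rw [hCdef]
        linarith
      rw [div_le_iff₀ (hLpos m)]
      have he : (Z (k:ℕ) + C / L m) * L m = L m * Z (k:ℕ) + C := by
        field_simp
        rw [mul_add, mul_div_assoc', mul_div_cancel_left₀ C (hLpos m).ne']; ring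
      rw [he]
      linarith
    have hlo : ∀ m, Z (k:ℕ) ≤ Real.log (X m k) / Real.log (1 / τ m) := by
      intro m
      rw [hlogτ m]
      have h1 : L m * Z (k:ℕ) ≤ Real.log (X m k) :=
        (Real.le_log_iff_exp_le (hXpos m k)).mpr (hlb m k)
      rw [le_div_iff₀ (hLpos m)]
      linarith [h1]
    have hupt : Filter.Tendsto (fun m => Z (k:ℕ) + C / L m) Filter.atTop
        (nhds (Z (k:ℕ))) := by
      have := (tendsto_const_nhds (x := Z (k:ℕ)) (f := Filter.atTop (α := ℕ))).add
        (Filter.Tendsto.div_atTop (tendsto_const_nhds (x := C)) hLtop)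
      simpa using this
    exact tendsto_of_tendsto_of_tendsto_of_le_of_le tendsto_const_nhds hupt hlo hup

/-- For `d ≥ 2`, the tropicalization of the Vandermonde cell is the
rational polyhedron `{y ∈ ℝ^d : y_k + y_{k+2} ≥ 2y_{k+1} (k = 1, …, d−2),
d·y_{d−1} ≥ (d−1)·y_d}` (indices of `y` written 1-based). -/
theorem trop_Ncell_eq (d : ℕ) (hd : 2 ≤ d) :
    trop (Ncell d) =
      {y : Fin d → ℝ |
        (∀ i j l : Fin d, (j : ℕ) = (i : ℕ) + 1 → (l : ℕ) = (i : ℕ) + 2 →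
          2 * y j ≤ y i + y l) ∧
        (∀ i j : Fin d, (i : ℕ) = d - 2 → (j : ℕ) = d - 1 →
          ((d : ℝ) - 1) * y j ≤ (d : ℝ) * y i)} := by
  exact Set.Subset.antisymm (trop_subset d hd) (subset_trop d hd)
end

section
/- Let L(x) = (L_{ij}(x))_{1 ≤ i, j ≤ N} be a symmetric N×N matrix of linear forms, L_{ij}(x) = Σ_{k=1}^s a_{ijk}·x_k with a_{ijk} = a_{jik} ∈ ℝ. Let v ∈ ℝ^s satisfy: (1) for every i and every k with a_{iik} < 0 there exists k' with a_{iik'} > 0 and v_{k'} > v_k; and (2) for all i ≠ j and every k with a_{ijk} ≠ 0 there exist k_1 with a_{iik_1} > 0 and k_2 with a_{jjk_2} > 0 such that v_{k_1} + v_{k_2} > 2·v_k. Then there exists t_0 > 1 such that for all t ≥ t_0 the real symmetric matrix L(t^{v_1}, …, t^{v_s}) is positive semidefinite. -/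
open scoped BigOperators

open Filter

private lemma aux_tendsto_psd {s : ℕ} (c e : Fin s → ℝ) (h : ∀ k, c k ≠ 0 → e k ≤ 0) :
    Filter.Tendsto (fun t : ℝ => ∑ k, c k * t ^ e k) Filter.atTop
      (nhds (∑ k, if e k = 0 then c k else 0)) := by
  apply tendsto_finset_sum
  intro k _
  by_cases hc : c k = 0
  · simp [hc]
  rcases lt_or_eq_of_le (h k hc) with he | he
  · rw [if_neg (ne_of_lt he)]
    have h0 : 0 < -e k := by linarith
    have := (tendsto_rpow_neg_atTop h0).const_mul (c k)
    simpa [neg_neg] using this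
  · rw [if_pos he]
    simp only [he, Real.rpow_zero, mul_one]
    exact tendsto_const_nhds

private lemma aux_quad_nonneg_psd {N : ℕ} (L : Fin N → Fin N → ℝ) (c m : Fin N → ℝ)
    (hcpos : ∀ i, 0 < c i)
    (t : ℝ) (htpos : 0 < t) (x : Fin N → ℝ)
    (S : Finset (Fin N))
    (hdg : ∀ i ∈ S, c i * t ^ m i ≤ L i i)
    (hoff : ∀ i ∈ S, ∀ j ∈ S, i ≠ j →
      |L i j| ≤ Real.sqrt (c i * c j) / N * t ^ ((m i + m j) / 2)) :
    0 ≤ ∑ i ∈ S, ∑ j ∈ S, L i j * (x i * x j) := by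
  classical
  set y : Fin N → ℝ := fun i => Real.sqrt (c i) * t ^ (m i / 2) * |x i| with hy
  have hynn : ∀ i, 0 ≤ y i := fun i =>
    mul_nonneg (mul_nonneg (Real.sqrt_nonneg _) (Real.rpow_pos_of_pos htpos _).le) (abs_nonneg _)
  have hsq : ∀ i, (y i) ^ 2 = c i * t ^ m i * (x i * x i) := by
    intro i
    have h1 : Real.sqrt (c i) ^ 2 = c i := Real.sq_sqrt (hcpos i).le
    have h2 : (t ^ (m i / 2)) ^ 2 = t ^ m i := by
      rw [sq, ← Real.rpow_add htpos, add_halves]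
    have h3 : |x i| ^ 2 = x i * x i := by rw [sq_abs, sq]
    calc (y i) ^ 2 = Real.sqrt (c i) ^ 2 * (t ^ (m i / 2)) ^ 2 * |x i| ^ 2 := by ring
      _ = c i * t ^ m i * (x i * x i) := by rw [h1, h2, h3]
  have hydiag : ∀ i ∈ S, (y i) ^ 2 ≤ L i i * (x i * x i) := by
    intro i hi
    rw [hsq i]
    exact mul_le_mul_of_nonneg_right (hdg i hi) (mul_self_nonneg _)
  have hyoff : ∀ i ∈ S, ∀ j ∈ S, i ≠ j →
      -(1 / (N:ℝ) * (y i * y j)) ≤ L i j * (x i * x j) := by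
    intro i hi j hj hij
    have habs : |L i j * (x i * x j)| ≤ 1 / (N:ℝ) * (y i * y j) := by
      have h4 : |L i j * (x i * x j)| = |L i j| * (|x i| * |x j|) := by
        rw [abs_mul, abs_mul]
      rw [h4]
      have h5 := mul_le_mul_of_nonneg_right (hoff i hi j hj hij)
        (mul_nonneg (abs_nonneg (x i)) (abs_nonneg (x j)))
      refine h5.trans_eq ?_
      have h6 : Real.sqrt (c i * c j) = Real.sqrt (c i) * Real.sqrt (c j) :=
        Real.sqrt_mul (hcpos i).le _
      have h7 : t ^ ((m i + m j) / 2) = t ^ (m i / 2) * t ^ (m j / 2) := by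
        rw [← Real.rpow_add htpos, add_div]
      rw [h6, h7, hy]
      ring
    linarith [neg_abs_le (L i j * (x i * x j))]
  have hmain : ∑ i ∈ S, ((y i) ^ 2 - ∑ j ∈ S.erase i, 1 / (N:ℝ) * (y i * y j))
      ≤ ∑ i ∈ S, ∑ j ∈ S, L i j * (x i * x j) := by
    apply Finset.sum_le_sum
    intro i hi
    rw [← Finset.sum_erase_add S _ hi]
    have hA : -∑ j ∈ S.erase i, 1 / (N:ℝ) * (y i * y j)
        ≤ ∑ j ∈ S.erase i, L i j * (x i * x j) := by
      rw [← Finset.sum_neg_distrib]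
      apply Finset.sum_le_sum
      intro j hj
      exact hyoff i hi j (Finset.mem_of_mem_erase hj) (Finset.ne_of_mem_erase hj).symm
    have hB := hydiag i hi
    linarith
  refine le_trans ?_ hmain
  rcases S.eq_empty_or_nonempty with hS | ⟨i0, hi0⟩
  · simp [hS]
  have hNpos : (0:ℝ) < N := by exact_mod_cast i0.pos
  have hTrw : ∀ i ∈ S, ∑ j ∈ S.erase i, 1 / (N:ℝ) * (y i * y j)
      = 1 / (N:ℝ) * (y i * ∑ j ∈ S, y j - y i * y i) := by
    intro i hi
    rw [← Finset.mul_sum, ← Finset.mul_sum, Finset.sum_erase_eq_sub hi]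
    ring
  set Y := ∑ i ∈ S, y i with hY
  set A := ∑ i ∈ S, (y i) ^ 2 with hA
  have hAnn : 0 ≤ A := Finset.sum_nonneg fun i _ => sq_nonneg _
  have key1 : Y ^ 2 ≤ (N:ℝ) * A := by
    refine le_trans sq_sum_le_card_mul_sum_sq ?_
    apply mul_le_mul_of_nonneg_right _ hAnn
    exact_mod_cast Finset.card_le_card (Finset.subset_univ S) |>.trans
      (le_of_eq (by simp))
  have key2 : ∑ i ∈ S, ∑ j ∈ S.erase i, 1 / (N:ℝ) * (y i * y j)
      = 1 / (N:ℝ) * (Y ^ 2 - A) := by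
    calc ∑ i ∈ S, ∑ j ∈ S.erase i, 1 / (N:ℝ) * (y i * y j)
        = ∑ i ∈ S, 1 / (N:ℝ) * (y i * Y - y i * y i) := Finset.sum_congr rfl hTrw
      _ = 1 / (N:ℝ) * ∑ i ∈ S, (y i * Y - y i ^ 2) := by
          rw [← Finset.mul_sum]
          congr 1
          exact Finset.sum_congr rfl fun i _ => by rw [sq]
      _ = 1 / (N:ℝ) * (Y ^ 2 - A) := by
          rw [Finset.sum_sub_distrib, ← Finset.sum_mul, ← hY, ← hA, sq]
  rw [Finset.sum_sub_distrib, key2, ← hA]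
  have hle : 1 / (N:ℝ) * (Y ^ 2 - A) ≤ A := by
    rw [one_div, inv_mul_le_iff₀ hNpos]
    nlinarith
  linarith

/-- Let `L(x) = (Σ_k a_{ijk} x_k)_{ij}` be a symmetric matrix of linear
forms and let `v` strictly satisfy the tropical inequalities coming from the `1×1` and
`2×2` principal minors of `L`. Then `L(t^{v₁}, …, t^{v_s})` is positive semidefinite for
all sufficiently large `t`. -/
theorem psd_for_large_t {N s : ℕ} (a : Fin N → Fin N → Fin s → ℝ)
    (hsym : ∀ i j k, a i j k = a j i k) (v : Fin s → ℝ)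
    (h1 : ∀ i k, a i i k < 0 → ∃ k', 0 < a i i k' ∧ v k < v k')
    (h2 : ∀ i j, i ≠ j → ∀ k, a i j k ≠ 0 →
      ∃ k₁ k₂, 0 < a i i k₁ ∧ 0 < a j j k₂ ∧ 2 * v k < v k₁ + v k₂) :
    ∃ t₀ : ℝ, 1 < t₀ ∧ ∀ t : ℝ, t₀ ≤ t →
      (Matrix.of fun i j => ∑ k, a i j k * t ^ v k).PosSemidef := by
  classical
  -- rows without positive diagonal coefficient are identically zero
  have hzero : ∀ i : Fin N, (¬ ∃ k, 0 < a i i k) → ∀ j k, a i j k = 0 := by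
    intro i hi j k
    by_cases hij : i = j
    · subst hij
      rcases lt_trichotomy (a i i k) 0 with h | h | h
      · obtain ⟨k', hk', _⟩ := h1 i k h; exact absurd ⟨k', hk'⟩ hi
      · exact h
      · exact absurd ⟨k, h⟩ hi
    · by_contra hne
      obtain ⟨k₁, _, hk₁, _, _⟩ := h2 i j hij k hne
      exact hi ⟨k₁, hk₁⟩
  -- per-row exponent and constant
  have main : ∀ i : Fin N, ∃ (mi ci : ℝ), 0 < ci ∧ (∀ k, 0 < a i i k → v k ≤ mi) ∧
      ((∃ k, 0 < a i i k) →
        ∀ᶠ t in Filter.atTop, ci * t ^ mi ≤ ∑ k, a i i k * t ^ v k) := by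
    intro i
    by_cases hi : ∃ k, 0 < a i i k
    · obtain ⟨k0, hk0⟩ := hi
      obtain ⟨K, hK, hKmax⟩ := Finset.exists_max_image
        (Finset.univ.filter fun k => 0 < a i i k) v
        ⟨k0, Finset.mem_filter.mpr ⟨Finset.mem_univ _, hk0⟩⟩
      rw [Finset.mem_filter] at hK
      have hKmax' : ∀ k, 0 < a i i k → v k ≤ v K := fun k hk =>
        hKmax k (Finset.mem_filter.mpr ⟨Finset.mem_univ _, hk⟩)
      set mi := v K with hmi
      have hle : ∀ k, a i i k ≠ 0 → v k - mi ≤ 0 := by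
        intro k hk
        rcases hk.lt_or_gt with h | h
        · obtain ⟨k', hk', hv⟩ := h1 i k h
          have := hKmax' k' hk'
          linarith
        · have := hKmax' k h; linarith
      have hT := aux_tendsto_psd (fun k => a i i k) (fun k => v k - mi) hle
      set D := ∑ k, if v k - mi = 0 then a i i k else 0 with hD
      have hDpos : 0 < D := by
        apply Finset.sum_pos'
        · intro k _
          by_cases hk : v k - mi = 0
          · rw [if_pos hk]
            by_contra hneg
            push_neg at hneg
            obtain ⟨k', hk', hv⟩ := h1 i k hneg
            have := hKmax' k' hk'
            linarith
          · rw [if_neg hk]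
        · exact ⟨K, Finset.mem_univ K, by simp [hK.2, hmi]⟩
      refine ⟨mi, D / 2, by linarith, hKmax', fun _ => ?_⟩
      have hev1 : ∀ᶠ t in atTop, D / 2 ≤ ∑ k, a i i k * t ^ (v k - mi) :=
        hT.eventually (eventually_ge_nhds (by linarith))
      filter_upwards [hev1, eventually_gt_atTop (0:ℝ)] with t ht htpos
      have hpow : 0 < t ^ mi := Real.rpow_pos_of_pos htpos mi
      calc D / 2 * t ^ mi ≤ (∑ k, a i i k * t ^ (v k - mi)) * t ^ mi :=
            mul_le_mul_of_nonneg_right ht hpow.le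
        _ = ∑ k, a i i k * t ^ v k := by
            rw [Finset.sum_mul]
            exact Finset.sum_congr rfl fun k _ => by
              rw [mul_assoc, ← Real.rpow_add htpos, sub_add_cancel]
    · exact ⟨0, 1, one_pos, fun k hk => absurd ⟨k, hk⟩ hi, fun h => absurd h hi⟩
  choose m c hcpos hmle hev using main
  -- diagonal bound as unconditional eventually
  have hdiag : ∀ i : Fin N, ∀ᶠ t in atTop,
      ((∃ k, 0 < a i i k) → c i * t ^ m i ≤ ∑ k, a i i k * t ^ v k) := by
    intro i
    by_cases hi : ∃ k, 0 < a i i k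
    · filter_upwards [hev i hi] with t ht _; exact ht
    · exact Eventually.of_forall fun t h' => absurd h' hi
  -- off-diagonal bound
  have hoffd : ∀ p : Fin N × Fin N, ∀ᶠ t in atTop,
      (p.1 ≠ p.2 → |∑ k, a p.1 p.2 k * t ^ v k| ≤
        Real.sqrt (c p.1 * c p.2) / N * t ^ ((m p.1 + m p.2) / 2)) := by
    rintro ⟨i, j⟩
    by_cases hij : i = j
    · exact Eventually.of_forall fun t h' => absurd hij h'
    simp only
    set E := (m i + m j) / 2 with hE
    have hlt : ∀ k, a i j k ≠ 0 → v k - E < 0 := by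
      intro k hk
      obtain ⟨k₁, k₂, hk₁, hk₂, hv⟩ := h2 i j hij k hk
      have m1 := hmle i k₁ hk₁
      have m2 := hmle j k₂ hk₂
      rw [hE]; linarith
    have hT := aux_tendsto_psd (a i j) (fun k => v k - E) (fun k hk => (hlt k hk).le)
    have hlim0 : (∑ k, if v k - E = 0 then a i j k else 0) = 0 := by
      apply Finset.sum_eq_zero
      intro k _
      by_cases h0 : v k - E = 0
      · rw [if_pos h0]
        by_contra hne
        exact absurd h0 (ne_of_lt (hlt k hne))
      · rw [if_neg h0]
    rw [hlim0] at hT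
    have hNpos : (0:ℝ) < N := by exact_mod_cast i.pos
    have hεpos : 0 < Real.sqrt (c i * c j) / N :=
      div_pos (Real.sqrt_pos.mpr (mul_pos (hcpos i) (hcpos j))) hNpos
    have habs : Tendsto (fun t : ℝ => |∑ k, a i j k * t ^ (v k - E)|) atTop (nhds 0) := by
      simpa using hT.abs
    filter_upwards [habs.eventually (eventually_le_nhds hεpos), eventually_gt_atTop (0:ℝ)]
      with t ht htpos _
    have hpow : 0 < t ^ E := Real.rpow_pos_of_pos htpos E
    have key : (∑ k, a i j k * t ^ v k) = (∑ k, a i j k * t ^ (v k - E)) * t ^ E := by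
      rw [Finset.sum_mul]
      exact Finset.sum_congr rfl fun k _ => by
        rw [mul_assoc, ← Real.rpow_add htpos, sub_add_cancel]
    rw [key, abs_mul, abs_of_pos hpow]
    exact mul_le_mul_of_nonneg_right ht hpow.le
  -- combine all eventual statements
  have big : ∀ᶠ t in atTop, ((2:ℝ) ≤ t ∧
      (∀ i : Fin N, (∃ k, 0 < a i i k) → c i * t ^ m i ≤ ∑ k, a i i k * t ^ v k) ∧
      (∀ p : Fin N × Fin N, p.1 ≠ p.2 → |∑ k, a p.1 p.2 k * t ^ v k| ≤
        Real.sqrt (c p.1 * c p.2) / N * t ^ ((m p.1 + m p.2) / 2))) :=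
    (eventually_ge_atTop 2).and ((eventually_all.2 hdiag).and (eventually_all.2 hoffd))
  obtain ⟨t₀, ht₀⟩ := eventually_atTop.mp big
  refine ⟨max t₀ 2, lt_of_lt_of_le one_lt_two (le_max_right _ _), ?_⟩
  intro t ht
  obtain ⟨ht2, hdg, hoff⟩ := ht₀ t (le_trans (le_max_left _ _) ht)
  have htpos : (0:ℝ) < t := by linarith
  rw [Matrix.posSemidef_iff_dotProduct_mulVec]
  constructor
  · -- Hermitian
    ext i j
    simp only [Matrix.conjTranspose_apply, Matrix.of_apply, star_trivial]
    exact Finset.sum_congr rfl fun k _ => by rw [hsym]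
  · intro x
    set L : Fin N → Fin N → ℝ := fun i j => ∑ k, a i j k * t ^ v k with hLdef
    have hQ : dotProduct (star x)
          ((Matrix.of fun i j => ∑ k, a i j k * t ^ v k).mulVec x)
        = ∑ i, ∑ j, L i j * (x i * x j) := by
      simp only [dotProduct, Matrix.mulVec, Matrix.of_apply, Pi.star_apply,
        star_trivial, Finset.mul_sum]
      exact Finset.sum_congr rfl fun i _ => Finset.sum_congr rfl fun j _ => by
        simp only [hLdef]; ring
    show 0 ≤ dotProduct (star x) ((Matrix.of fun i j => ∑ k, a i j k * t ^ v k).mulVec x)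
    rw [hQ]
    set S : Finset (Fin N) := Finset.univ.filter (fun i => ∃ k, 0 < a i i k) with hSdef
    have hrow : ∀ i j : Fin N, j ∉ S → L i j = 0 := by
      intro i j hj
      have hj' : ¬ ∃ k, 0 < a j j k := by simpa [hSdef] using hj
      exact Finset.sum_eq_zero fun k _ => by rw [hsym, hzero j hj' i k, zero_mul]
    have hcol : ∀ i : Fin N, i ∉ S → ∀ j, L i j = 0 := by
      intro i hi j
      have hi' : ¬ ∃ k, 0 < a i i k := by simpa [hSdef] using hi
      exact Finset.sum_eq_zero fun k _ => by rw [hzero i hi' j k, zero_mul]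
    have hres : ∑ i ∈ S, ∑ j ∈ S, L i j * (x i * x j)
        = ∑ i, ∑ j, L i j * (x i * x j) := by
      rw [Finset.sum_subset (Finset.subset_univ S) (fun i _ hi =>
        Finset.sum_eq_zero fun j _ => by rw [hcol i hi j, zero_mul])]
      · exact Finset.sum_congr rfl fun i _ =>
          Finset.sum_subset (Finset.subset_univ S) (fun j _ hj => by
            rw [hrow i j hj, zero_mul])
    rw [← hres]
    apply aux_quad_nonneg_psd L c m hcpos t htpos x S
    · intro i hi
      exact hdg i (by simpa [hSdef] using hi)
    · intro i hi j hj hij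
      exact hoff ⟨i, j⟩ hij
end

section
/- Let a_1, a_2, a_3 be positive real numbers with a_1·a_2·a_3 = 1. Then for every positive integer n and every x ∈ ℝ^n, a_1·p_2(x)^5 + a_2·p_6(x)·p_4(x) + a_3·p_8(x)·p_2(x) − 3·p_6(x)·p_2(x)^2 ≥ 0; that is, the even symmetric form a_1·p_{(2^5)} + a_2·p_{(6,4)} + a_3·p_{(8,2)} − 3·p_{(6,2²)} is nonnegative in any number of variables. -/
/-! The three products `a₁p₂⁵`, `a₂p₆p₄`, `a₃p₈p₂` are nonnegative and, since `a₁a₂a₃ = 1`,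
their product is `p₂⁶ · p₆ · (p₄p₈) ≥ (p₆p₂²)³` by the Cauchy–Schwarz inequality `p₆² ≤ p₄p₈`.
AM-GM for three terms then bounds their sum below by `3p₆p₂²`. -/

open scoped BigOperators

theorem mul_mul_le_add_add_pow_three {u v w : ℝ} (hu : 0 ≤ u) (hv : 0 ≤ v) (hw : 0 ≤ w) :
    27 * (u * v * w) ≤ (u + v + w) ^ 3 := by
  nlinarith [mul_nonneg hu (sq_nonneg (v - w)), mul_nonneg hv (sq_nonneg (u - w)),
    mul_nonneg hw (sq_nonneg (u - v)), mul_nonneg (mul_nonneg hu hv) hw]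

theorem three_mul_le_add_add_of_pow_three_le_mul {t u v w : ℝ} (hu : 0 ≤ u) (hv : 0 ≤ v)
    (hw : 0 ≤ w) (ht : t ^ 3 ≤ u * v * w) : 3 * t ≤ u + v + w := by
  have hsum : 0 ≤ u + v + w := by positivity
  have hcube : (3 * t) ^ 3 ≤ (u + v + w) ^ 3 := by
    linarith [mul_mul_le_add_add_pow_three hu hv hw]
  exact le_of_pow_le_pow_left₀ (by norm_num) hsum hcube

section PowerSums

variable {n : ℕ}

theorem psum_nonneg_of_even {r : ℕ} (hr : Even r) (x : Fin n → ℝ) : 0 ≤ psum r x :=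
  Finset.sum_nonneg fun i _ => hr.pow_nonneg (x i)

theorem psum_add_sq_le_mul_psum (a b : ℕ) (x : Fin n → ℝ) :
    psum (a + b) x ^ 2 ≤ psum (2 * a) x * psum (2 * b) x := by
  have hcs := Finset.sum_mul_sq_le_sq_mul_sq Finset.univ (fun i => x i ^ a) (fun i => x i ^ b)
  simp only [← pow_add, ← pow_mul, mul_comm _ 2] at hcs
  exact hcs

end PowerSums

/-- For positive reals `a₁, a₂, a₃` with `a₁a₂a₃ = 1`, the even
symmetric form `a₁p_{(2⁵)} + a₂p_{(6,4)} + a₃p_{(8,2)} − 3p_{(6,2²)}` is nonnegative in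
any number of variables. -/
theorem decic_nonneg (a₁ a₂ a₃ : ℝ) (h₁ : 0 < a₁) (h₂ : 0 < a₂) (h₃ : 0 < a₃)
    (h : a₁ * a₂ * a₃ = 1) :
    ∀ n : ℕ, 0 < n → ∀ x : Fin n → ℝ,
      0 ≤ a₁ * psum 2 x ^ 5 + a₂ * psum 6 x * psum 4 x + a₃ * psum 8 x * psum 2 x -
        3 * psum 6 x * psum 2 x ^ 2 := by
  intro n _ x
  have hp2 := psum_nonneg_of_even (by decide : Even 2) x
  have hp4 := psum_nonneg_of_even (by decide : Even 4) x
  have hp6 := psum_nonneg_of_even (by decide : Even 6) x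
  have hp8 := psum_nonneg_of_even (by decide : Even 8) x
  have hcs : psum 6 x ^ 2 ≤ psum 4 x * psum 8 x := psum_add_sq_le_mul_psum 2 4 x
  have hprod : (psum 6 x * psum 2 x ^ 2) ^ 3 ≤
      (a₁ * psum 2 x ^ 5) * (a₂ * psum 6 x * psum 4 x) * (a₃ * psum 8 x * psum 2 x) := by
    have hexpand : (a₁ * psum 2 x ^ 5) * (a₂ * psum 6 x * psum 4 x) * (a₃ * psum 8 x * psum 2 x)
        = psum 2 x ^ 6 * psum 6 x * (psum 4 x * psum 8 x) := by
      linear_combination (psum 2 x ^ 6 * psum 6 x * psum 4 x * psum 8 x) * h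
    rw [hexpand]
    have hscaled := mul_le_mul_of_nonneg_left hcs (by positivity : 0 ≤ psum 2 x ^ 6 * psum 6 x)
    linarith
  have hamgm := three_mul_le_add_add_of_pow_three_le_mul (by positivity) (by positivity)
    (by positivity) hprod
  linarith
end
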